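/- arXiv:1206.2612 — 4 statements merged into one kernel-verified Lean document; each statement's English description precedes it below -/
import Mathlib

section
/- For every nonempty subset I ⊆ [n], the Laurent polynomial Y_I equals the determinant of the principal submatrix 𝒴_I of 𝒴 with row and column indices I: Y_I = det(𝒴_I). -/
open MvPolynomial

/-- The ambient field: rational functions in the indeterminates `A_1,…,A_n,X_1,…,X_n`. -/
abbrev Kn (n : ℕ) : Type := FractionRing (MvPolynomial (Fin n ⊕ Fin n) ℤ)

/-- The coefficient `A_i`, as an element of the ambient field. -/
noncomputable def AA {n : ℕ} (i : Fin n) : Kn n :=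
  algebraMap (MvPolynomial (Fin n ⊕ Fin n) ℤ) (Kn n) (X (Sum.inl i))

/-- The initial cluster variable `X_i`, as an element of the ambient field. -/
noncomputable def XX {n : ℕ} (i : Fin n) : Kn n :=
  algebraMap (MvPolynomial (Fin n ⊕ Fin n) ℤ) (Kn n) (X (Sum.inr i))

/-- `f` is acyclic on `I`: the only directed cycles in the graph `{i → f(i) : i ∈ I}`
are loops at fixed points. -/
def IsAcyclicOn {n : ℕ} (I : Finset (Fin n)) (f : Fin n → Fin n) : Prop :=
  ∀ i ∈ I, ∀ k : ℕ, 0 < k → (∀ r < k, f^[r] i ∈ I) → f^[k] i = i → f i = i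

open Classical in
/-- The numerator `N_I` of `Y_I`: the generating function of acyclic functions `f : I → [n]`
(encoded as functions `Fin n → Fin n` fixing every vertex outside `I`), where a fixed point
`i ∈ I` contributes `A_i` and a non-fixed point contributes `X_{f i}`. -/
noncomputable def Ynum {n : ℕ} (E : Fin n → Fin n → Prop) (I : Finset (Fin n)) :
    MvPolynomial (Fin n ⊕ Fin n) ℤ :=
  ∑ f : Fin n → Fin n,
    if (∀ i, i ∉ I → f i = i) ∧ (∀ i ∈ I, f i = i ∨ E i (f i)) ∧ IsAcyclicOn I f then
      ∏ i ∈ I, if f i = i then X (Sum.inl i) else X (Sum.inr (f i))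
    else 0

/-- The Laurent polynomial `Y_I` (with `Y_∅ = 1`). -/
noncomputable def YY {n : ℕ} (E : Fin n → Fin n → Prop) (I : Finset (Fin n)) : Kn n :=
  algebraMap (MvPolynomial (Fin n ⊕ Fin n) ℤ) (Kn n) (Ynum E I) / ∏ i ∈ I, XX i

open Classical in
/-- `P_S^{i,j}`: the sum of `Y_{S − p}` over all simple paths `p : i →_S j` in the graph,
whose intermediate vertices lie in `S`.  A path with `m` edges is encoded as an injective
map `v : Fin (m+1) → Fin n` whose consecutive values are edges. -/
noncomputable def PP {n : ℕ} (E : Fin n → Fin n → Prop) (S : Finset (Fin n)) (i j : Fin n) :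
    Kn n :=
  ∑ m ∈ Finset.range (n + 1), ∑ v : Fin (m + 1) → Fin n,
    if Function.Injective v ∧ v 0 = i ∧ v (Fin.last m) = j ∧
        (∀ r : Fin m, E (v r.castSucc) (v r.succ)) ∧
        (∀ r : Fin (m + 1), r ≠ 0 → r ≠ Fin.last m → v r ∈ S) then
      YY E (S \ Finset.image v Finset.univ)
    else 0

open Classical in
/-- The matrix `𝒴`, with diagonal entries `Y_{{i}}`, entries `−1` at edges of the graph,
and `0` elsewhere. -/
noncomputable def Ymat {n : ℕ} (E : Fin n → Fin n → Prop) : Matrix (Fin n) (Fin n) (Kn n) :=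
  Matrix.of fun i j => if i = j then YY E {i} else if E i j then -1 else 0

/-!
Write `𝒴_I = N_I · diag(X)⁻¹`, where `N` is the Laplacian of the graph with weight `X_j` on each
edge `i → j`, to which the weight `A_i` of a loop at `i` is added on the diagonal. Row `i` of
`N_I` is `∑_j w(i,j) (e_i - e_j)`, where the term `j = i` is read as `A_i e_i` and `e_j = 0` for
`j ∉ I`. Expanding by multilinearity, `det N_I` is the sum over all `f : I → [n]` of
`∏ w(i, f i)` times `det (1 - P_f)`, with `P_f` the adjacency matrix of the functional graph of
`f` without its loops. That determinant is `1` when every orbit of `f` ends in a fixed point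
(ordering the vertices by the time needed to get there makes `1 - P_f` triangular) and `0`
otherwise (the rows along a cycle sum to zero). The diagonal entries `Y_{i}` are the case
`I = {i}`.
-/

open Function

theorem Function.exists_iterate_mem_periodicPts {α : Type*} [Finite α] (f : α → α) (x : α) :
    ∃ k, f^[k] x ∈ periodicPts f := by
  obtain ⟨i, j, hij, h⟩ := Finite.exists_ne_map_eq_of_infinite fun k : ℕ => f^[k] x
  wlog hlt : i < j generalizing i j
  · exact this j i hij.symm h.symm (by omega)
  refine ⟨i, mk_mem_periodicPts (Nat.sub_pos_of_lt hlt) ?_⟩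
  change f^[j - i] (f^[i] x) = f^[i] x
  rw [← iterate_add_apply, Nat.sub_add_cancel hlt.le]
  exact h.symm

theorem Finset.sum_extend_id {α M : Type*} [DecidableEq α] [Fintype α] [AddCommMonoid M]
    (I : Finset α) (F : (α → α) → M) :
    ∑ g : I → α, F (fun x => if h : x ∈ I then g ⟨x, h⟩ else x) =
      ∑ f : α → α, if ∀ x ∉ I, f x = x then F f else 0 := by
  rw [← sum_filter]
  refine sum_nbij' (fun g x => if h : x ∈ I then g ⟨x, h⟩ else x) (fun f (a : I) => f a)
    ?_ (by simp) (fun g _ => by simp) ?_ (fun _ _ => rfl)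
  · intro g _
    simp only [mem_filter, mem_univ, true_and]
    exact fun x hx => dif_neg hx
  · intro f hf
    simp only [mem_filter, mem_univ, true_and] at hf
    funext x
    by_cases hx : x ∈ I
    · rw [dif_pos hx]
    · rw [dif_neg hx, hf x hx]

namespace Matrix

section Determinant

variable {ι β R : Type*} [DecidableEq ι] [Fintype ι] [CommRing R]

theorem det_of_sum_smul [Fintype β] (c : ι → β → R) (v : ι → β → ι → R) :
    (of fun i => ∑ j, c i j • v i j).det =
      ∑ g : ι → β, (∏ i, c i (g i)) * (of fun i => v i (g i)).det := by
  change detRowAlternating.toMultilinearMap (fun i => ∑ j, c i j • v i j) = _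
  rw [MultilinearMap.map_sum]
  refine Finset.sum_congr rfl fun g _ => ?_
  rw [MultilinearMap.map_smul_univ, smul_eq_mul]
  rfl

theorem det_submatrix_eq_det_of_row_eq_single (M : Matrix ι ι R) (I : Finset ι)
    (h : ∀ a ∉ I, M.row a = Pi.single a 1) :
    (M.submatrix ((↑) : I → ι) (↑)).det = M.det := by
  have hrow : ∀ a ∉ I, ∀ b, M a b = (Pi.single a 1 : ι → R) b :=
    fun a ha b => congr_fun (h a ha) b
  have hzero : ∀ a, a ∉ I → ∀ b, b ∈ I → M a b = 0 := fun a ha b hb => by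
    rw [hrow a ha, Pi.single_eq_of_ne (fun hba : b = a => ha (hba ▸ hb))]
  have hblock : M.toSquareBlockProp (· ∉ I) = 1 := by
    ext a b
    simp [toSquareBlockProp_def, hrow a a.2, Pi.single_apply, one_apply, Subtype.ext_iff,
      eq_comm]
  rw [twoBlockTriangular_det M (· ∈ I) hzero, hblock, det_one, mul_one]
  -- the two determinants use different `Fintype` instances on `I`
  convert rfl
  exact toSquareBlockProp_def M _

end Determinant

section FunGraph

variable {α R : Type*} [DecidableEq α]

section Ring

variable [Ring R]

variable (R) in
/-- `1 - P`, for `P` the adjacency matrix of the functional graph of `f` with its loops removed. -/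
def funGraphMatrix (f : α → α) : Matrix α α R :=
  of fun a b => if a = b then 1 else if f a = b then -1 else 0

theorem funGraphMatrix_row_of_ne {f : α → α} {a : α} (h : f a ≠ a) :
    (funGraphMatrix R f).row a = Pi.single a 1 - Pi.single (f a) 1 := by
  ext b
  by_cases hab : a = b
  · subst hab; simp [funGraphMatrix, h]
  · by_cases hfb : f a = b
    · subst hfb; simp [funGraphMatrix, h.symm]
    · simp [funGraphMatrix, hab, hfb, Ne.symm hab, Ne.symm hfb]

theorem funGraphMatrix_row_of_isFixedPt {f : α → α} {a : α} (h : IsFixedPt f a) :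
    (funGraphMatrix R f).row a = Pi.single a 1 := by
  ext b
  by_cases hab : a = b
  · subst hab; simp [funGraphMatrix]
  · simp [funGraphMatrix, hab, h.eq, Ne.symm hab]

end Ring

variable [CommRing R] [Fintype α]

theorem det_funGraphMatrix_eq_zero {f : α → α} {x : α} (hx : x ∈ periodicPts f)
    (hfx : f x ≠ x) : (funGraphMatrix R f).det = 0 := by
  have hp := minimalPeriod_pos_of_mem_periodicPts hx
  have hcycle : ∀ r, f (f^[r] x) ≠ f^[r] x := fun r h =>
    hfx (isPeriodicPt_of_mem_periodicPts_of_isPeriodicPt_iterate (m := 1) hx h)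
  set v : α → R := ∑ r ∈ Finset.range (minimalPeriod f x), Pi.single (f^[r] x) 1 with hv_def
  have hv : v ᵥ* funGraphMatrix R f = 0 := by
    simp only [hv_def, sum_vecMul, single_one_vecMul, funGraphMatrix_row_of_ne (hcycle _),
      ← iterate_succ_apply' f]
    rw [Finset.sum_range_sub', iterate_zero_apply, iterate_minimalPeriod, sub_self]
  have hvx : v x = 1 := by
    rw [hv_def, Finset.sum_apply, Finset.sum_eq_single_of_mem 0 (Finset.mem_range.2 hp)]
    · simp
    · intro r hr hr0
      refine Pi.single_eq_of_ne (fun h => hr0 ?_) _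
      exact iterate_injOn_Iio_minimalPeriod (Finset.mem_range.1 hr) hp h.symm
  rw [← det_transpose]
  refine det_eq_zero_of_mulVec_eq_zero_of_mem_nonZeroDivisors (v := v) (i := x) ?_ ?_
  · rwa [mulVec_transpose]
  · rw [hvx]
    exact one_mem _

theorem det_funGraphMatrix_eq_one {f : α → α} (h : ∀ a, ∃ k, IsFixedPt f (f^[k] a)) :
    (funGraphMatrix R f).det = 1 := by
  classical
  obtain ⟨depth, hfix, hmin⟩ : ∃ d : α → ℕ,
      (∀ a, IsFixedPt f (f^[d a] a)) ∧ ∀ a k, IsFixedPt f (f^[k] a) → d a ≤ k :=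
    ⟨fun a => Nat.find (h a), fun a => Nat.find_spec (h a), fun a _ hk => Nat.find_min' _ hk⟩
  have hdepth : ∀ a, f a ≠ a → depth (f a) < depth a := by
    intro a ha
    have hpos : depth a ≠ 0 := fun h0 => ha (by simpa [h0] using hfix a : IsFixedPt f a)
    refine lt_of_le_of_lt (hmin _ (depth a - 1) ?_) (by omega)
    rw [← iterate_succ_apply, show (depth a - 1).succ = depth a by omega]
    exact hfix a
  have hentry : ∀ a b, a ≠ b → depth a ≤ depth b → funGraphMatrix R f a b = 0 := by
    intro a b hab hle
    have : f a ≠ b := fun hfa => (hdepth a (hfa ▸ hab.symm)).not_ge (hfa ▸ hle)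
    simp [funGraphMatrix, hab, this]
  have htri : BlockTriangular (funGraphMatrix R f) (OrderDual.toDual ∘ depth) :=
    fun a b hlt => hentry a b (fun hab => by subst hab; exact lt_irrefl _ hlt) hlt.le
  have hblock : ∀ d, (funGraphMatrix R f).toSquareBlock (OrderDual.toDual ∘ depth) d = 1 := by
    intro d
    ext a b
    by_cases hab : a = b
    · subst hab; simp [toSquareBlock_def, funGraphMatrix]
    · rw [one_apply_ne hab, toSquareBlock_def, of_apply, hentry _ _ (fun h => hab (Subtype.ext h))
        (OrderDual.toDual.injective (a.2.trans b.2.symm)).le]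
  rw [htri.det]
  exact Finset.prod_eq_one fun d _ => by rw [hblock, det_one]

open Classical in
theorem det_funGraphMatrix (f : α → α) :
    (funGraphMatrix R f).det = if periodicPts f ⊆ fixedPoints f then 1 else 0 := by
  split_ifs with h
  · exact det_funGraphMatrix_eq_one fun a =>
      (exists_iterate_mem_periodicPts f a).imp fun _ hk => h hk
  · obtain ⟨x, hx, hfx⟩ := Set.not_subset.mp h
    exact det_funGraphMatrix_eq_zero hx hfx

end FunGraph

variable {α R : Type*} [DecidableEq α] [Fintype α] [CommRing R]

def loopLaplacian (w : α → α → R) : Matrix α α R :=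
  of fun a b => if a = b then ∑ j, w a j else -w a b

open Classical in
theorem det_submatrix_loopLaplacian (w : α → α → R) (I : Finset α) :
    ((loopLaplacian w).submatrix ((↑) : I → α) (↑)).det =
      ∑ f : α → α, if (∀ x ∉ I, f x = x) ∧ periodicPts f ⊆ fixedPoints f then
        ∏ a ∈ I, w a (f a) else 0 := by
  have hrows : (loopLaplacian w).submatrix ((↑) : I → α) (↑) = of fun a : I => ∑ j, w a j •
      fun b : I => if (a : α) = b then (1 : R) else if j = b then -1 else 0 := by
    ext a b
    by_cases hab : a = b
    · subst hab; simp [loopLaplacian]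
    · have hab' : (a : α) ≠ b := fun h => hab (Subtype.ext h)
      simp [loopLaplacian, hab, hab', Finset.sum_apply]
  have hgraph : ∀ g : I → α, (of fun a b : I =>
      if (a : α) = b then (1 : R) else if g a = b then -1 else 0).det =
        (funGraphMatrix R fun x => if h : x ∈ I then g ⟨x, h⟩ else x).det := by
    intro g
    rw [← det_submatrix_eq_det_of_row_eq_single _ I
      fun x hx => funGraphMatrix_row_of_isFixedPt (dif_neg hx)]
    congr 1
    ext a b
    simp [funGraphMatrix]
  have hsum := Finset.sum_extend_id I fun f => (∏ a ∈ I, w a (f a)) * (funGraphMatrix R f).det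
  rw [hrows, det_of_sum_smul]
  refine .trans ?_ (hsum.trans (Finset.sum_congr rfl fun f _ => ?_))
  · refine Finset.sum_congr rfl fun g _ => ?_
    rw [hgraph, ← Finset.prod_coe_sort I]
    simp
  · rw [det_funGraphMatrix]
    split_ifs <;> simp_all

end Matrix

open Matrix

section Graph

variable {n : ℕ}

theorem isAcyclicOn_iff_periodicPts_subset_fixedPoints {I : Finset (Fin n)} {f : Fin n → Fin n}
    (hf : ∀ x ∉ I, f x = x) : IsAcyclicOn I f ↔ periodicPts f ⊆ fixedPoints f := by
  refine ⟨fun h x hx => ?_, fun h x _ k hk _ hper => h (mk_mem_periodicPts hk hper)⟩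
  have hp := minimalPeriod_pos_of_mem_periodicPts hx
  by_cases hout : ∃ r < minimalPeriod f x, f^[r] x ∉ I
  · obtain ⟨r, -, hr⟩ := hout
    exact isPeriodicPt_of_mem_periodicPts_of_isPeriodicPt_iterate (m := 1) hx (hf _ hr)
  · push Not at hout
    exact h x (hout 0 hp) _ hp hout iterate_minimalPeriod

open Classical in
noncomputable def arrowWeight (E : Fin n → Fin n → Prop) (a j : Fin n) :
    MvPolynomial (Fin n ⊕ Fin n) ℤ :=
  if j = a then X (Sum.inl a) else if E a j then X (Sum.inr j) else 0

open Classical in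
theorem Ynum_eq_sum_arrowWeight (E : Fin n → Fin n → Prop) (I : Finset (Fin n)) :
    Ynum E I = ∑ f : Fin n → Fin n,
      if (∀ x ∉ I, f x = x) ∧ periodicPts f ⊆ fixedPoints f then
        ∏ a ∈ I, arrowWeight E a (f a) else 0 := by
  rw [Ynum]
  refine Finset.sum_congr rfl fun f _ => ?_
  by_cases hfix : ∀ x ∉ I, f x = x
  · rw [isAcyclicOn_iff_periodicPts_subset_fixedPoints hfix]
    by_cases hac : periodicPts f ⊆ fixedPoints f
    · rw [if_pos (show (∀ x ∉ I, f x = x) ∧ periodicPts f ⊆ fixedPoints f from ⟨hfix, hac⟩)]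
      by_cases hedge : ∀ i ∈ I, f i = i ∨ E i (f i)
      · rw [if_pos ⟨hfix, hedge, hac⟩]
        refine Finset.prod_congr rfl fun i hi => ?_
        rcases hedge i hi with h | h <;> by_cases hfi : f i = i <;> simp_all [arrowWeight]
      · push Not at hedge
        obtain ⟨i, hi, hfi, hEi⟩ := hedge
        rw [if_neg fun h => (h.2.1 i hi).elim hfi hEi,
          Finset.prod_eq_zero hi (by simp [arrowWeight, hfi, hEi])]
    · rw [if_neg fun h => hac h.2.2, if_neg fun h => hac h.2]
  · rw [if_neg fun h => hfix h.1, if_neg fun h => hfix h.1]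

theorem Ynum_eq_det (E : Fin n → Fin n → Prop) (I : Finset (Fin n)) :
    Ynum E I = ((loopLaplacian (arrowWeight E)).submatrix ((↑) : I → Fin n) (↑)).det := by
  rw [det_submatrix_loopLaplacian, Ynum_eq_sum_arrowWeight]
  congr!

theorem Ynum_singleton (E : Fin n → Fin n → Prop) (a : Fin n) :
    Ynum E {a} = loopLaplacian (arrowWeight E) a a := by
  rw [Ynum_eq_det, det_unique]
  rfl

theorem XX_ne_zero (i : Fin n) : XX i ≠ 0 :=
  (map_ne_zero_iff _ (IsFractionRing.injective _ _)).mpr (X_ne_zero _)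

theorem Ymat_apply (E : Fin n → Fin n → Prop) (a b : Fin n) :
    Ymat E a b = algebraMap _ (Kn n) (loopLaplacian (arrowWeight E) a b) * (XX b)⁻¹ := by
  by_cases hab : a = b
  · subst hab
    simp [Ymat, YY, Ynum_singleton, div_eq_mul_inv]
  · by_cases hE : E a b
    · have : algebraMap _ (Kn n) (X (Sum.inr b)) = XX b := rfl
      simp [Ymat, loopLaplacian, arrowWeight, hab, Ne.symm hab, hE, this, XX_ne_zero]
    · simp [Ymat, loopLaplacian, arrowWeight, hab, Ne.symm hab, hE]

end Graph

theorem stmt8_general (n : ℕ) (E : Fin n → Fin n → Prop)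
    (I : Finset (Fin n)) :
    YY E I = Matrix.det (Matrix.of fun a b : {x // x ∈ I} => Ymat E a.1 b.1) := by
  have hmat : (Matrix.of fun a b : {x // x ∈ I} => Ymat E a.1 b.1) =
      ((loopLaplacian (arrowWeight E)).submatrix ((↑) : I → Fin n) (↑)).map
        (algebraMap _ (Kn n)) * diagonal fun b : I => (XX (b : Fin n))⁻¹ := by
    ext a b
    simp [Ymat_apply]
  rw [hmat, det_mul, det_diagonal, ← RingHom.mapMatrix_apply, ← RingHom.map_det, ← Ynum_eq_det,
    Finset.prod_inv_distrib, Finset.prod_coe_sort I XX, YY, div_eq_mul_inv]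

/-- `Y_I` equals the principal minor `det 𝒴_I` of the matrix `𝒴`. -/
theorem stmt8 (n : ℕ) (E : Fin n → Fin n → Prop) (hE : ∀ i, ¬ E i i)
    (I : Finset (Fin n)) (hI : I.Nonempty) :
    YY E I = Matrix.det (Matrix.of fun a b : {x // x ∈ I} => Ymat E a.1 b.1) :=
  stmt8_general n E I
end

section
/- Let S ⊆ [n] and i ∉ S. Then the rational function (Σ_{j ∉ S ∪ {i}} P_S^{i,j} X_j + Σ_{j ∈ S ∪ {i}} P_S^{i,j} A_j) / Y_{S ⊖ i} (which equals X_i · Y_{S ⊕ i}) lies in the subring of ℚ(A_1,…,A_n,X_1,…,X_n) generated over ℤ by the X_j (j ∈ [n]), the A_j (j ∈ [n]), and the elements Y_T for subsets T ⊆ S; that is, it can be written as a polynomial with integer coefficients in the X_j, the A_j, and the Y_T with T ⊆ S. -/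
/-!
Write `X̃_j` for `A_j` when `j ∈ S ∪ {i}` and `X_j` otherwise. The numerator is a path
expansion of `X_i Y_{S ∪ {i}}`: an acyclic function on `T ∪ {a}` is the same thing as the path
it traces from `a` up to its first fixed point (or until it leaves `T ∪ {a}`), together with an
acyclic function on the vertices of `T` off that path, so `Σ_j P_T^{a,j} X̃_j = X_a Y_{T ∪ {a}}`
for `a ∉ T`, with `X̃` now taken relative to `T ∪ {a}`.

`Y` is multiplicative over a disjoint union `U ∪ V` when no vertex of `U` and vertex of `V` are
mutually reachable, because an acyclic function then splits into its restrictions to `U` and `V`.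
Hence `Y_{S ∪ {i}} = Y_{S ⊕ i} Y_{S ⊖ i}` and the quotient is `X_i Y_{S ⊕ i}`. Expanding this
once more along paths, now with `T = (S ⊕ i) − {i} ⊆ S`, exhibits it as a sum of products of
the `X_j`, the `A_j` and the `Y_{T − p}`.
-/

open MvPolynomial

/-- Reachability inside a subset `U` of vertices, along edges of `E`. -/
def ReachIn {n : ℕ} (E : Fin n → Fin n → Prop) (U : Finset (Fin n)) (a b : Fin n) : Prop :=
  Relation.ReflTransGen (fun x y => E x y ∧ x ∈ U ∧ y ∈ U) a b

/-- A nonempty subset `I` is strongly connected if any vertex of `I` can reach any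
other vertex of `I` by a directed path staying inside `I`. -/
def StronglyConnected {n : ℕ} (E : Fin n → Fin n → Prop) (I : Finset (Fin n)) : Prop :=
  I.Nonempty ∧ ∀ a ∈ I, ∀ b ∈ I, ReachIn E I a b

open Classical in
/-- The strongly connected component of `x` in the induced subgraph on `U`. -/
noncomputable def scc {n : ℕ} (E : Fin n → Fin n → Prop) (U : Finset (Fin n)) (x : Fin n) :
    Finset (Fin n) :=
  U.filter fun y => ReachIn E U x y ∧ ReachIn E U y x

/-- `S ⊕ j` : the strongly connected component of `S ∪ {j}` containing `j`. -/
noncomputable def oplus {n : ℕ} (E : Fin n → Fin n → Prop) (S : Finset (Fin n)) (j : Fin n) :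
    Finset (Fin n) :=
  scc E (insert j S) j

/-- `S ⊖ j = (S ∪ {j}) − (S ⊕ j)`. -/
noncomputable def ominus {n : ℕ} (E : Fin n → Fin n → Prop) (S : Finset (Fin n)) (j : Fin n) :
    Finset (Fin n) :=
  insert j S \ oplus E S j

/-- A family of strongly connected subsets is nested if any two members are nested or
disjoint, and any tuple of pairwise disjoint members are exactly the strongly connected
components of their union. -/
def Nested {n : ℕ} (E : Fin n → Fin n → Prop) (𝒮 : Finset (Finset (Fin n))) : Prop :=
  (∀ I ∈ 𝒮, StronglyConnected E I) ∧
  (∀ I ∈ 𝒮, ∀ J ∈ 𝒮, I ⊆ J ∨ J ⊆ I ∨ Disjoint I J) ∧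
  (∀ 𝒯 ⊆ 𝒮, (∀ I ∈ 𝒯, ∀ J ∈ 𝒯, I ≠ J → Disjoint I J) →
    ∀ I ∈ 𝒯, ∀ x ∈ I, scc E (𝒯.sup id) x = I)

/-- The support of a collection: the union of its members. -/
def nsupport {n : ℕ} (𝒮 : Finset (Finset (Fin n))) : Finset (Fin n) := 𝒮.sup id

/-- A nested collection is maximal (for its support) if the only nested collection with the
same support containing it is itself. -/
def MaximalNested {n : ℕ} (E : Fin n → Fin n → Prop) (𝒮 : Finset (Finset (Fin n))) : Prop :=
  Nested E 𝒮 ∧ ∀ 𝒮' : Finset (Finset (Fin n)),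
    Nested E 𝒮' → nsupport 𝒮' = nsupport 𝒮 → 𝒮 ⊆ 𝒮' → 𝒮' = 𝒮

open Classical Finset

theorem Function.iterate_eq_iterate_of_eqOn {α : Type*} {f g : α → α} {W : Set α}
    (hfg : Set.EqOn f g W) {x : α} : ∀ {k : ℕ}, (∀ r < k, f^[r] x ∈ W) → f^[k] x = g^[k] x
  | 0, _ => rfl
  | k + 1, h => by
    rw [Function.iterate_succ_apply', Function.iterate_succ_apply',
      ← iterate_eq_iterate_of_eqOn hfg fun r hr => h r (by omega), hfg (h k k.lt_succ_self)]

theorem Finset.image_castSucc_eq_erase_last {α : Type*} [DecidableEq α] {m : ℕ}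
    {v : Fin (m + 1) → α} (hv : Function.Injective v) :
    univ.image (fun r : Fin m => v r.castSucc) = (univ.image v).erase (v (Fin.last m)) := by
  change univ.image (v ∘ Fin.castSucc) = _
  rw [← image_image, Fin.image_castSucc, compl_eq_univ_sdiff, image_sdiff_of_injOn hv.injOn
    (subset_univ _), image_singleton, sdiff_singleton_eq_erase]

theorem Finset.image_succ_eq_erase_zero {α : Type*} [DecidableEq α] {m : ℕ}
    {v : Fin (m + 1) → α} (hv : Function.Injective v) :
    univ.image (fun r : Fin m => v r.succ) = (univ.image v).erase (v 0) := by
  change univ.image (v ∘ Fin.succ) = _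
  rw [← image_image, Fin.image_succ_univ, compl_eq_univ_sdiff, image_sdiff_of_injOn hv.injOn
    (subset_univ _), image_singleton, sdiff_singleton_eq_erase]

section AcyclicFunctions

variable {n : ℕ} {E : Fin n → Fin n → Prop} {I U V : Finset (Fin n)} {f g h : Fin n → Fin n}

theorem IsAcyclicOn.mono (hf : IsAcyclicOn I f) (hUI : U ⊆ I) : IsAcyclicOn U f :=
  fun x hx k hk horb hcyc => hf x (hUI hx) k hk (fun r hr => hUI (horb r hr)) hcyc

theorem IsAcyclicOn.congr (hg : IsAcyclicOn I g) (hfg : ∀ x ∈ I, f x = g x) :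
    IsAcyclicOn I f := by
  intro x hx k hk horb hcyc
  have hit : ∀ {s}, s ≤ k → f^[s] x = g^[s] x := fun hs =>
    Function.iterate_eq_iterate_of_eqOn (W := ↑I) (fun y hy => hfg y hy)
      fun r hr => horb r (by omega)
  rw [hfg x hx]
  exact hg x hx k hk (fun r hr => hit hr.le ▸ horb r hr) (hit le_rfl ▸ hcyc)

theorem IsAcyclicOn.apply_iterate_eq_of_iterate_eq (hf : IsAcyclicOn I f) {a : Fin n}
    {r s : ℕ} (hrs : r < s) (horb : ∀ t < s, f^[t] a ∈ I) (heq : f^[r] a = f^[s] a) :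
    f (f^[r] a) = f^[r] a :=
  hf _ (horb r hrs) (s - r) (by omega)
    (fun t ht => by rw [← Function.iterate_add_apply]; exact horb (t + r) (by omega))
    (by rw [← Function.iterate_add_apply, Nat.sub_add_cancel hrs.le, heq])

theorem IsAcyclicOn.of_mapsTo {P : Finset (Fin n)} (hP : Set.MapsTo f P P)
    (hout : IsAcyclicOn (I \ P) f) (hin : IsAcyclicOn P f) : IsAcyclicOn I f := by
  intro x hx k hk horb hcyc
  by_cases hxP : x ∈ P
  · exact hin x hxP k hk (fun r _ => hP.iterate r hxP) hcyc
  refine hout x (mem_sdiff.2 ⟨hx, hxP⟩) k hk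
    (fun r hr => mem_sdiff.2 ⟨horb r hr, fun hrP => hxP ?_⟩) hcyc
  have := hP.iterate (k - r) hrP
  rwa [← Function.iterate_add_apply, Nat.sub_add_cancel hr.le, hcyc] at this

theorem reachIn_iterate (hI : ∀ x ∈ I, f x = x ∨ E x (f x)) {x : Fin n} :
    ∀ {t : ℕ}, (∀ r ≤ t, f^[r] x ∈ I) → ReachIn E I x (f^[t] x)
  | 0, _ => .refl
  | t + 1, horb => by
    have ih := reachIn_iterate hI (t := t) fun r hr => horb r (by omega)
    have hmem := horb (t + 1) le_rfl
    rw [Function.iterate_succ_apply'] at hmem ⊢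
    rcases hI _ (horb t (by omega)) with hfix | hadj
    · rwa [hfix]
    · exact ih.tail ⟨hadj, horb t (by omega), hmem⟩

theorem reachIn_of_mem_cycle (hI : ∀ x ∈ I, f x = x ∨ E x (f x)) {x : Fin n} {k : ℕ}
    (hk : 0 < k) (horb : ∀ r < k, f^[r] x ∈ I) (hcyc : f^[k] x = x) {r : ℕ} (hr : r < k) :
    ReachIn E I x (f^[r] x) ∧ ReachIn E I (f^[r] x) x := by
  have horb' : ∀ s ≤ k, f^[s] x ∈ I := fun s hs => by
    rcases hs.lt_or_eq with hs | rfl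
    · exact horb s hs
    · rw [hcyc]; exact horb 0 hk
  refine ⟨reachIn_iterate hI fun s hs => horb' s (by omega), ?_⟩
  have := reachIn_iterate (x := f^[r] x) (t := k - r) hI fun s hs => by
    rw [← Function.iterate_add_apply]; exact horb' _ (by omega)
  rwa [← Function.iterate_add_apply, Nat.sub_add_cancel hr.le, hcyc] at this

/-- A cycle meeting both `U` and `V` would make a vertex of `U` and one of `V` mutually
reachable. -/
theorem IsAcyclicOn.union (hUV : ∀ x ∈ U ∪ V, f x = x ∨ E x (f x)) (hU : IsAcyclicOn U f)
    (hV : IsAcyclicOn V f)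
    (hsep : ∀ x ∈ U, ∀ y ∈ V, ReachIn E (U ∪ V) x y → ¬ ReachIn E (U ∪ V) y x) :
    IsAcyclicOn (U ∪ V) f := by
  intro x hx k hk horb hcyc
  have hreach := fun {r} (hr : r < k) => reachIn_of_mem_cycle hUV hk horb hcyc hr
  rcases mem_union.1 hx with hxU | hxV
  · by_contra hfx
    obtain ⟨r, hr, hrU⟩ : ∃ r < k, f^[r] x ∉ U := by
      by_contra! hall; exact hfx (hU x hxU k hk hall hcyc)
    exact hsep x hxU _ ((mem_union.1 (horb r hr)).resolve_left hrU) (hreach hr).1 (hreach hr).2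
  · by_contra hfx
    obtain ⟨r, hr, hrV⟩ : ∃ r < k, f^[r] x ∉ V := by
      by_contra! hall; exact hfx (hV x hxV k hk hall hcyc)
    exact hsep _ ((mem_union.1 (horb r hr)).resolve_right hrV) x hxV (hreach hr).2 (hreach hr).1

structure IsAcyclicFun (E : Fin n → Fin n → Prop) (I : Finset (Fin n)) (f : Fin n → Fin n) :
    Prop where
  eq_self_of_notMem : ∀ i ∉ I, f i = i
  eq_self_or_adj : ∀ i ∈ I, f i = i ∨ E i (f i)
  isAcyclicOn : IsAcyclicOn I f

theorem IsAcyclicFun.restrict (hf : IsAcyclicFun E I f) (hUI : U ⊆ I) :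
    IsAcyclicFun E U (U.piecewise f id) where
  eq_self_of_notMem i hi := piecewise_eq_of_notMem _ _ _ hi
  eq_self_or_adj i hi := by rw [piecewise_eq_of_mem _ _ _ hi]; exact hf.eq_self_or_adj i (hUI hi)
  isAcyclicOn := (hf.isAcyclicOn.mono hUI).congr fun _ hx => piecewise_eq_of_mem _ _ _ hx

theorem IsAcyclicFun.piecewise (hg : IsAcyclicFun E U g) (hh : IsAcyclicFun E V h)
    (hUV : Disjoint U V)
    (hsep : ∀ x ∈ U, ∀ y ∈ V, ReachIn E (U ∪ V) x y → ¬ ReachIn E (U ∪ V) y x) :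
    IsAcyclicFun E (U ∪ V) (U.piecewise g h) := by
  have hU : ∀ x ∈ U, U.piecewise g h x = g x := fun x hx => piecewise_eq_of_mem _ _ _ hx
  have hV : ∀ x ∈ V, U.piecewise g h x = h x := fun x hx =>
    piecewise_eq_of_notMem _ _ _ (disjoint_right.1 hUV hx)
  have hstep : ∀ x ∈ U ∪ V, U.piecewise g h x = x ∨ E x (U.piecewise g h x) := by
    intro x hx
    rcases mem_union.1 hx with hx | hx
    · rw [hU x hx]; exact hg.eq_self_or_adj x hx
    · rw [hV x hx]; exact hh.eq_self_or_adj x hx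
  refine ⟨fun x hx => ?_, hstep,
    .union hstep (hg.isAcyclicOn.congr hU) (hh.isAcyclicOn.congr hV) hsep⟩
  rw [mem_union, not_or] at hx
  rw [piecewise_eq_of_notMem _ _ _ hx.1, hh.eq_self_of_notMem x hx.2]

end AcyclicFunctions

section Multiplicativity

variable {n : ℕ} {E : Fin n → Fin n → Prop} {I U V : Finset (Fin n)} {f g : Fin n → Fin n}

local notation "φ" => algebraMap (MvPolynomial (Fin n ⊕ Fin n) ℤ) (Kn n)

noncomputable def weight (I : Finset (Fin n)) (f : Fin n → Fin n) :
    MvPolynomial (Fin n ⊕ Fin n) ℤ :=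
  ∏ i ∈ I, if f i = i then X (Sum.inl i) else X (Sum.inr (f i))

theorem weight_congr (hfg : ∀ i ∈ I, f i = g i) : weight I f = weight I g :=
  prod_congr rfl fun i hi => by rw [hfg i hi]

variable (E I) in
theorem Ynum_eq_sum_weight :
    Ynum E I = ∑ f ∈ univ.filter (IsAcyclicFun E I), weight I f := by
  rw [sum_filter]
  exact sum_congr rfl fun f _ =>
    if_congr ⟨fun h => ⟨h.1, h.2.1, h.2.2⟩, fun h => ⟨h.1, h.2, h.3⟩⟩ rfl rfl

variable (E I) in
/-- Evaluating at `A = 1`, `X = 0` kills every term except that of the identity. -/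
theorem Ynum_ne_zero : Ynum E I ≠ 0 := by
  have hid : IsAcyclicFun E I id := ⟨fun _ _ => rfl, fun _ _ => .inl rfl, fun _ _ _ _ _ _ => rfl⟩
  intro h
  have := congrArg (eval (Sum.elim (fun _ => (1 : ℤ)) fun _ => 0)) h
  rw [Ynum_eq_sum_weight, map_sum,
    sum_eq_single_of_mem id (mem_filter.2 ⟨mem_univ _, hid⟩)] at this
  · simp [weight] at this
  · intro f hf hne
    obtain ⟨i, hi, hfi⟩ : ∃ i ∈ I, f i ≠ i := by
      by_contra! hfix
      exact hne (funext fun x =>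
        if hx : x ∈ I then hfix x hx else (mem_filter.1 hf).2.eq_self_of_notMem x hx)
    rw [weight, map_prod]
    exact prod_eq_zero hi (by simp [hfi])

theorem Ynum_union (hUV : Disjoint U V)
    (hsep : ∀ x ∈ U, ∀ y ∈ V, ReachIn E (U ∪ V) x y → ¬ ReachIn E (U ∪ V) y x) :
    Ynum E (U ∪ V) = Ynum E U * Ynum E V := by
  simp only [Ynum_eq_sum_weight, sum_mul_sum, ← sum_product']
  refine sum_nbij' (fun f => (U.piecewise f id, V.piecewise f id))
    (fun p => U.piecewise p.1 p.2) ?_ ?_ ?_ ?_ ?_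
  · intro f hf
    simp only [mem_filter, mem_product, mem_univ, true_and] at hf ⊢
    exact ⟨hf.restrict subset_union_left, hf.restrict subset_union_right⟩
  · intro p hp
    simp only [mem_filter, mem_product, mem_univ, true_and] at hp ⊢
    exact hp.1.piecewise hp.2 hUV hsep
  · intro f hf
    simp only [mem_filter, mem_univ, true_and] at hf
    funext x
    by_cases hxU : x ∈ U
    · simp [hxU]
    by_cases hxV : x ∈ V
    · simp [hxU, hxV]
    · simp [hxU, hxV, hf.eq_self_of_notMem x (by simp [hxU, hxV])]
  · intro p hp
    simp only [mem_filter, mem_product, mem_univ, true_and] at hp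
    refine Prod.ext (funext fun x => ?_) (funext fun x => ?_)
    · by_cases hxU : x ∈ U
      · simp [hxU]
      · simp [hxU, hp.1.eq_self_of_notMem x hxU]
    · by_cases hxV : x ∈ V
      · simp [hxV, disjoint_right.1 hUV hxV]
      · simp [hxV, hp.2.eq_self_of_notMem x hxV]
  · intro f _
    rw [weight, prod_union hUV, ← weight, ← weight,
      weight_congr fun i hi => piecewise_eq_of_mem U f id hi,
      weight_congr fun i hi => piecewise_eq_of_mem V f id hi]

theorem prod_XX (I : Finset (Fin n)) : ∏ i ∈ I, XX i = φ (∏ i ∈ I, X (Sum.inr i)) :=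
  (map_prod _ _ _).symm

theorem algebraMap_ne_zero {p : MvPolynomial (Fin n ⊕ Fin n) ℤ} (hp : p ≠ 0) : φ p ≠ 0 :=
  (map_ne_zero_iff _ (IsFractionRing.injective _ _)).2 hp

theorem YY_ne_zero : YY E I ≠ 0 :=
  div_ne_zero (algebraMap_ne_zero (Ynum_ne_zero E I))
    (prod_ne_zero_iff.2 fun _ _ => algebraMap_ne_zero (X_ne_zero _))

theorem YY_union (hUV : Disjoint U V)
    (hsep : ∀ x ∈ U, ∀ y ∈ V, ReachIn E (U ∪ V) x y → ¬ ReachIn E (U ∪ V) y x) :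
    YY E (U ∪ V) = YY E U * YY E V := by
  rw [YY, YY, YY, Ynum_union hUV hsep, map_mul, prod_union hUV, mul_div_mul_comm]

end Multiplicativity

section StrongComponents

variable {n : ℕ} {E : Fin n → Fin n → Prop} {S : Finset (Fin n)} {i : Fin n}

theorem mem_oplus_iff {x : Fin n} :
    x ∈ oplus E S i ↔ x ∈ insert i S ∧ ReachIn E (insert i S) i x ∧ ReachIn E (insert i S) x i :=
  mem_filter

theorem mem_oplus_self : i ∈ oplus E S i :=
  mem_oplus_iff.2 ⟨mem_insert_self i S, .refl, .refl⟩

theorem erase_oplus_subset : (oplus E S i).erase i ⊆ S := fun _ hx =>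
  (mem_insert.1 (mem_oplus_iff.1 (mem_of_mem_erase hx)).1).resolve_left (ne_of_mem_erase hx)

theorem YY_insert_eq_YY_oplus_mul_YY_ominus :
    YY E (insert i S) = YY E (oplus E S i) * YY E (ominus E S i) := by
  have hunion : oplus E S i ∪ ominus E S i = insert i S :=
    union_sdiff_of_subset (filter_subset _ _)
  rw [← hunion]
  refine YY_union disjoint_sdiff fun x hx y hy hxy hyx => ?_
  rw [hunion] at hxy hyx
  obtain ⟨-, hix, hxi⟩ := mem_oplus_iff.1 hx
  exact (mem_sdiff.1 hy).2 (mem_oplus_iff.2 ⟨(mem_sdiff.1 hy).1, hix.trans hxy, hyx.trans hxi⟩)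

end StrongComponents

section Trajectories

variable {n : ℕ} {E : Fin n → Fin n → Prop} {T : Finset (Fin n)} {a : Fin n} {m : ℕ}
  {v : Fin (m + 1) → Fin n} {f : Fin n → Fin n}

structure IsPathFrom (E : Fin n → Fin n → Prop) (T : Finset (Fin n)) (a : Fin n)
    (v : Fin (m + 1) → Fin n) : Prop where
  injective : Function.Injective v
  apply_zero : v 0 = a
  adj : ∀ r : Fin m, E (v r.castSucc) (v r.succ)
  mem : ∀ r : Fin (m + 1), r ≠ 0 → r ≠ Fin.last m → v r ∈ T

theorem IsPathFrom.mem_image (hp : IsPathFrom E T a v) : a ∈ univ.image v :=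
  hp.apply_zero ▸ mem_image_of_mem v (mem_univ 0)

theorem IsPathFrom.mem_insert (hp : IsPathFrom E T a v) {r : Fin (m + 1)}
    (hr : r ≠ Fin.last m) : v r ∈ insert a T := by
  by_cases h0 : r = 0
  · rw [h0, hp.apply_zero]; exact mem_insert_self a T
  · exact mem_insert_of_mem (hp.mem r h0 hr)

structure IsTrajectory (f : Fin n → Fin n) (a : Fin n) (v : Fin (m + 1) → Fin n) : Prop where
  iterate_eq : ∀ r : Fin (m + 1), f^[r] a = v r
  apply_last : f (v (Fin.last m)) = v (Fin.last m)

theorem IsTrajectory.apply_castSucc (ht : IsTrajectory f a v) (r : Fin m) :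
    f (v r.castSucc) = v r.succ := by
  rw [← ht.iterate_eq, ← ht.iterate_eq, Fin.val_succ, Fin.val_castSucc,
    Function.iterate_succ_apply']

theorem IsTrajectory.iterate_length (ht : IsTrajectory f a v) : f^[m] a = v (Fin.last m) := by
  simpa only [Fin.val_last] using ht.iterate_eq (Fin.last m)

theorem IsTrajectory.mapsTo (ht : IsTrajectory f a v) :
    Set.MapsTo f ↑(univ.image v) ↑(univ.image v) := by
  simp only [coe_image, coe_univ, Set.image_univ]
  rintro _ ⟨r, rfl⟩
  rcases Fin.eq_castSucc_or_eq_last r with ⟨r, rfl⟩ | rfl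
  · exact ⟨r.succ, (ht.apply_castSucc r).symm⟩
  · exact ⟨_, ht.apply_last.symm⟩

/-- Past `v (Fin.last m)` the orbit of `a` is constant, so it can only return to a vertex
of `v` at that fixed point. -/
theorem IsTrajectory.isAcyclicOn (ht : IsTrajectory f a v) (hv : Function.Injective v) :
    IsAcyclicOn (univ.image v) f := by
  simp only [IsAcyclicOn, Finset.mem_image, mem_univ, true_and, forall_exists_index,
    forall_apply_eq_imp_iff]
  intro r k hk _ hcyc
  rw [← ht.iterate_eq, ← Function.iterate_add_apply] at hcyc
  by_cases hkr : k + r ≤ m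
  · have := hv ((ht.iterate_eq ⟨k + r, by omega⟩).symm.trans (hcyc.trans (ht.iterate_eq r)))
    simp [Fin.ext_iff] at this
    omega
  · have hlast : f^[k + r] a = v (Fin.last m) := by
      rw [show k + r = (k + r - m) + m by omega, Function.iterate_add_apply, ht.iterate_length,
        Function.iterate_fixed ht.apply_last]
    rw [hv ((ht.iterate_eq r).symm.trans (hcyc.symm.trans hlast))]
    exact ht.apply_last

theorem IsTrajectory.length_eq {m' : ℕ} {w : Fin (m' + 1) → Fin n} (hv : IsTrajectory f a v)
    (hw : IsTrajectory f a w) (hvi : Function.Injective v) (hwi : Function.Injective w) :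
    m = m' := by
  have key : ∀ {m m' : ℕ} {v : Fin (m + 1) → Fin n} {w : Fin (m' + 1) → Fin n},
      IsTrajectory f a v → IsTrajectory f a w → Function.Injective w → ¬ m < m' := by
    intro m m' v w hv hw hwi hlt
    have hfix : f (f^[m] a) = f^[m] a := by rw [hv.iterate_length]; exact hv.apply_last
    have := hwi ((hw.iterate_eq ⟨m + 1, by omega⟩).symm.trans
      ((Function.iterate_succ_apply' f m a).trans (hfix.trans (hw.iterate_eq ⟨m, by omega⟩))))
    simp [Fin.ext_iff] at this
  have := key hv hw hwi
  have := key hw hv hvi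
  omega

theorem IsTrajectory.eq {w : Fin (m + 1) → Fin n} (hv : IsTrajectory f a v)
    (hw : IsTrajectory f a w) : v = w :=
  funext fun r => (hv.iterate_eq r).symm.trans (hw.iterate_eq r)

/-- Follow `f` from `a` up to its first fixed point: acyclicity forces one to exist, and
before it the orbit cannot leave `insert a T`, outside of which `f` is the identity. -/
theorem IsAcyclicFun.exists_isPathFrom_isTrajectory (hf : IsAcyclicFun E (insert a T) f) :
    ∃ m, ∃ v : Fin (m + 1) → Fin n, IsPathFrom E T a v ∧ IsTrajectory f a v := by
  have hmem : ∀ k, f (f^[k] a) ≠ f^[k] a → f^[k] a ∈ insert a T := fun k h =>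
    by_contra fun hk => h (hf.eq_self_of_notMem _ hk)
  have hex : ∃ k, f (f^[k] a) = f^[k] a := by
    by_contra! hnfix
    obtain ⟨r, s, hne, heq⟩ := Finite.exists_ne_map_eq_of_infinite fun k => f^[k] a
    rcases lt_or_gt_of_ne hne with hrs | hrs
    · exact hnfix r (hf.isAcyclicOn.apply_iterate_eq_of_iterate_eq hrs
        (fun t _ => hmem t (hnfix t)) heq)
    · exact hnfix s (hf.isAcyclicOn.apply_iterate_eq_of_iterate_eq hrs
        (fun t _ => hmem t (hnfix t)) heq.symm)
  have hmin : ∀ k < Nat.find hex, f (f^[k] a) ≠ f^[k] a := fun k hk => Nat.find_min hex hk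
  have hne : ∀ r s, r < s → s ≤ Nat.find hex → f^[r] a ≠ f^[s] a := fun r s hrs hs heq =>
    hmin r (by omega) (hf.isAcyclicOn.apply_iterate_eq_of_iterate_eq hrs
      (fun t ht => hmem t (hmin t (by omega))) heq)
  have hinj : Function.Injective fun r : Fin (Nat.find hex + 1) => f^[r] a := by
    intro r s h
    by_contra hrs
    rcases lt_or_gt_of_ne (Fin.val_ne_of_ne hrs) with hlt | hlt
    · exact hne _ _ hlt (by omega) h
    · exact hne _ _ hlt (by omega) h.symm
  refine ⟨Nat.find hex, fun r => f^[r] a, ⟨hinj, rfl, fun r => ?_, fun r h0 hl => ?_⟩,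
    ⟨fun _ => rfl, Nat.find_spec hex⟩⟩
  · have := (hf.eq_self_or_adj _ (hmem r (hmin r r.2))).resolve_left (hmin r r.2)
    simpa only [Fin.val_succ, Fin.val_castSucc, Function.iterate_succ_apply'] using this
  · have hr : (r : ℕ) < Nat.find hex := by
      have := Fin.val_ne_of_ne hl; simp only [Fin.val_last] at this; omega
    refine (mem_insert.1 (hmem r (hmin r hr))).resolve_left fun h => h0 ?_
    exact hinj (h.trans (Function.iterate_zero_apply f a).symm)

theorem IsAcyclicFun.sum_ite_isPathFrom_isTrajectory {M : Type*} [AddCommMonoid M]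
    (hf : IsAcyclicFun E (insert a T) f) (c : M) :
    ∑ m ∈ range (n + 1), ∑ v : Fin (m + 1) → Fin n,
      (if IsPathFrom E T a v ∧ IsTrajectory f a v then c else 0) = c := by
  obtain ⟨m, v, hp, ht⟩ := hf.exists_isPathFrom_isTrajectory
  have hm : m ∈ range (n + 1) := by
    have := Fintype.card_le_of_injective v hp.injective
    simp only [Fintype.card_fin] at this
    exact mem_range.2 (by omega)
  rw [sum_eq_single_of_mem m hm, sum_eq_single_of_mem v (mem_univ v), if_pos ⟨hp, ht⟩]
  · exact fun w _ hw => if_neg fun h => hw (h.2.eq ht)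
  · exact fun m' _ hm' => sum_eq_zero fun w _ =>
      if_neg fun h => hm' (h.2.length_eq ht h.1.injective hp.injective)

end Trajectories

section Glue

variable {n : ℕ} {E : Fin n → Fin n → Prop} {T : Finset (Fin n)} {a : Fin n} {m : ℕ}
  {v : Fin (m + 1) → Fin n} {f g : Fin n → Fin n}

noncomputable def glue (v : Fin (m + 1) → Fin n) (g : Fin n → Fin n) : Fin n → Fin n :=
  fun x => if h : ∃ r : Fin m, v r.castSucc = x then v h.choose.succ else g x

theorem glue_castSucc (hv : Function.Injective v) (r : Fin m) :
    glue v g (v r.castSucc) = v r.succ := by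
  have h : ∃ r' : Fin m, v r'.castSucc = v r.castSucc := ⟨r, rfl⟩
  rw [glue, dif_pos h, Fin.castSucc_injective m (hv h.choose_spec)]

theorem glue_of_forall_ne {x : Fin n} (hx : ∀ r : Fin m, v r.castSucc ≠ x) :
    glue v g x = g x :=
  dif_neg (not_exists.2 hx)

theorem glue_of_notMem {x : Fin n} (hx : x ∉ univ.image v) : glue v g x = g x :=
  glue_of_forall_ne fun _ h => hx (h ▸ mem_image_of_mem v (mem_univ _))

theorem IsPathFrom.isTrajectory_glue (hp : IsPathFrom E T a v)
    (hg : IsAcyclicFun E (T \ univ.image v) g) : IsTrajectory (glue v g) a v := by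
  have hit : ∀ k (hk : k ≤ m), (glue v g)^[k] a = v ⟨k, by omega⟩ := by
    intro k hk
    induction k with
    | zero => exact hp.apply_zero.symm
    | succ k ih =>
      rw [Function.iterate_succ_apply', ih (by omega)]
      exact glue_castSucc hp.injective ⟨k, hk⟩
  refine ⟨fun r => hit r (by omega), ?_⟩
  rw [glue_of_forall_ne fun r h => (Fin.castSucc_ne_last r) (hp.injective h)]
  exact hg.eq_self_of_notMem _ fun h => (mem_sdiff.1 h).2 (mem_image_of_mem v (mem_univ _))

theorem IsPathFrom.isAcyclicFun_glue (hp : IsPathFrom E T a v)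
    (hg : IsAcyclicFun E (T \ univ.image v) g) :
    IsAcyclicFun E (insert a T) (glue v g) := by
  have ht := hp.isTrajectory_glue hg
  refine ⟨fun x hx => ?_, fun x hx => ?_, ?_⟩
  · rw [glue_of_forall_ne fun r (h : v r.castSucc = x) =>
      hx (h ▸ hp.mem_insert (Fin.castSucc_ne_last r))]
    exact hg.eq_self_of_notMem x fun h => hx (mem_insert_of_mem (mem_sdiff.1 h).1)
  · by_cases h : ∃ r : Fin m, v r.castSucc = x
    · obtain ⟨r, rfl⟩ := h
      rw [glue_castSucc hp.injective]
      exact .inr (hp.adj r)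
    rw [glue_of_forall_ne (not_exists.1 h)]
    by_cases hx' : x ∈ T \ univ.image v
    · exact hg.eq_self_or_adj x hx'
    · exact .inl (hg.eq_self_of_notMem x hx')
  · refine .of_mapsTo ht.mapsTo ?_ (ht.isAcyclicOn hp.injective)
    rw [insert_sdiff_of_mem T hp.mem_image]
    exact hg.isAcyclicOn.congr fun x hx => glue_of_notMem (mem_sdiff.1 hx).2

theorem IsPathFrom.glue_piecewise (hp : IsPathFrom E T a v)
    (hf : IsAcyclicFun E (insert a T) f) (ht : IsTrajectory f a v) :
    glue v ((T \ univ.image v).piecewise f id) = f := by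
  funext x
  by_cases h : ∃ r : Fin m, v r.castSucc = x
  · obtain ⟨r, rfl⟩ := h
    rw [glue_castSucc hp.injective, ht.apply_castSucc]
  rw [glue_of_forall_ne (not_exists.1 h)]
  by_cases hx : x ∈ T \ univ.image v
  · exact piecewise_eq_of_mem _ _ _ hx
  rw [piecewise_eq_of_notMem _ _ _ hx, id]
  by_cases hxv : x ∈ univ.image v
  · obtain ⟨r, -, rfl⟩ := Finset.mem_image.1 hxv
    rcases Fin.eq_castSucc_or_eq_last r with ⟨r, rfl⟩ | rfl
    · exact absurd ⟨r, rfl⟩ h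
    · exact ht.apply_last.symm
  · refine (hf.eq_self_of_notMem x fun hxI => hx (mem_sdiff.2 ⟨?_, hxv⟩)).symm
    exact (Finset.mem_insert.1 hxI).resolve_left fun hxa => hxv (hxa ▸ hp.mem_image)

theorem piecewise_glue (hg : IsAcyclicFun E (T \ univ.image v) g) :
    (T \ univ.image v).piecewise (glue v g) id = g := by
  funext x
  by_cases hx : x ∈ T \ univ.image v
  · rw [piecewise_eq_of_mem _ _ _ hx, glue_of_notMem (mem_sdiff.1 hx).2]
  · rw [piecewise_eq_of_notMem _ _ _ hx, id, hg.eq_self_of_notMem x hx]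

theorem IsPathFrom.sum_weight_fiber (hp : IsPathFrom E T a v) :
    ∑ f ∈ univ.filter (fun f => IsAcyclicFun E (insert a T) f ∧ IsTrajectory f a v),
      weight (T \ univ.image v) f = Ynum E (T \ univ.image v) := by
  have hsub : T \ univ.image v ⊆ insert a T := sdiff_subset.trans (subset_insert a T)
  rw [Ynum_eq_sum_weight]
  refine sum_nbij' (fun f => (T \ univ.image v).piecewise f id) (glue v) ?_ ?_ ?_ ?_ ?_
  · intro f hf
    simp only [mem_filter, mem_univ, true_and] at hf ⊢
    exact hf.1.restrict hsub
  · intro g hg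
    simp only [mem_filter, mem_univ, true_and] at hg ⊢
    exact ⟨hp.isAcyclicFun_glue hg, hp.isTrajectory_glue hg⟩
  · intro f hf
    simp only [mem_filter, mem_univ, true_and] at hf
    exact hp.glue_piecewise hf.1 hf.2
  · intro g hg
    simp only [mem_filter, mem_univ, true_and] at hg
    exact piecewise_glue hg
  · exact fun f _ => (weight_congr fun i hi => piecewise_eq_of_mem _ f id hi).symm

end Glue

section PathExpansion

variable {n : ℕ} {E : Fin n → Fin n → Prop} {T : Finset (Fin n)} {a : Fin n} {m : ℕ}
  {v : Fin (m + 1) → Fin n} {f : Fin n → Fin n}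

local notation "φ" => algebraMap (MvPolynomial (Fin n ⊕ Fin n) ℤ) (Kn n)

/-- The coefficient of `P_T^{a,j}` in the statement, with `I = T ∪ {a}`. -/
noncomputable def Xtilde (I : Finset (Fin n)) (j : Fin n) : MvPolynomial (Fin n ⊕ Fin n) ℤ :=
  if j ∈ I then X (Sum.inl j) else X (Sum.inr j)

theorem IsTrajectory.weight_erase_last (ht : IsTrajectory f a v) (hv : Function.Injective v) :
    weight ((univ.image v).erase (v (Fin.last m))) f =
      ∏ t ∈ (univ.image v).erase (v 0), X (Sum.inr t) := by
  rw [weight, ← image_castSucc_eq_erase_last hv, ← image_succ_eq_erase_zero hv,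
    prod_image fun r _ s _ h => Fin.castSucc_injective m (hv h),
    prod_image fun r _ s _ h => Fin.succ_injective m (hv h)]
  refine prod_congr rfl fun r _ => ?_
  rw [ht.apply_castSucc, if_neg fun h => Fin.castSucc_lt_succ.ne' (hv h)]

theorem IsPathFrom.image_subset_insert (hp : IsPathFrom E T a v)
    (hlast : v (Fin.last m) ∈ insert a T) : univ.image v ⊆ insert a T := fun x hx => by
  obtain ⟨r, -, rfl⟩ := Finset.mem_image.1 hx
  by_cases hr : r = Fin.last m
  · exact hr ▸ hlast
  · exact hp.mem_insert hr

theorem IsPathFrom.erase_image_eq_insert_inter (hp : IsPathFrom E T a v) (ha : a ∉ T)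
    (hlast : v (Fin.last m) ∉ insert a T) :
    (univ.image v).erase a = insert (v (Fin.last m)) (T ∩ univ.image v) := by
  ext x
  simp only [mem_erase, Finset.mem_insert, mem_inter]
  constructor
  · rintro ⟨hxa, hxP⟩
    obtain ⟨r, -, rfl⟩ := Finset.mem_image.1 hxP
    by_cases hr : r = Fin.last m
    · exact .inl (hr ▸ rfl)
    · exact .inr ⟨hp.mem r (fun h => hxa (h ▸ hp.apply_zero)) hr, hxP⟩
  · rintro (rfl | ⟨hxT, hxP⟩)
    · exact ⟨fun h => hlast (h ▸ mem_insert_self a T), mem_image_of_mem v (mem_univ _)⟩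
    · exact ⟨fun h => ha (h ▸ hxT), hxP⟩

/-- The last vertex of the path contributes `A` if it is a root inside `insert a T`; every
other vertex contributes the `X` of its successor. -/
theorem IsPathFrom.weight_inter_image (hp : IsPathFrom E T a v) (ha : a ∉ T)
    (ht : IsTrajectory f a v) :
    weight (insert a T ∩ univ.image v) f =
      Xtilde (insert a T) (v (Fin.last m)) * ∏ t ∈ T ∩ univ.image v, X (Sum.inr t) := by
  set P := univ.image v
  have hlastP : v (Fin.last m) ∈ P := mem_image_of_mem v (mem_univ _)
  have hshift := ht.weight_erase_last hp.injective
  rw [hp.apply_zero] at hshift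
  by_cases hlast : v (Fin.last m) ∈ insert a T
  · have hIP : insert a T ∩ P = P := inter_eq_right.2 (hp.image_subset_insert hlast)
    have hTP : T ∩ P = P.erase a := by
      ext x
      simp only [mem_inter, mem_erase]
      refine ⟨fun ⟨hxT, hxP⟩ => ⟨fun h => ha (h ▸ hxT), hxP⟩, fun ⟨hxa, hxP⟩ => ⟨?_, hxP⟩⟩
      exact (Finset.mem_insert.1 (hp.image_subset_insert hlast hxP)).resolve_left hxa
    rw [Xtilde, if_pos hlast, hIP, weight, ← mul_prod_erase P _ hlastP, if_pos ht.apply_last,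
      ← weight, hshift, hTP]
  · have hIP : insert a T ∩ P = P.erase (v (Fin.last m)) := by
      ext x
      simp only [mem_inter, mem_erase]
      refine ⟨fun ⟨hxI, hxP⟩ => ⟨fun h => hlast (h ▸ hxI), hxP⟩, fun ⟨hx, hxP⟩ => ⟨?_, hxP⟩⟩
      obtain ⟨r, -, rfl⟩ := Finset.mem_image.1 hxP
      exact hp.mem_insert fun h => hx (h ▸ rfl)
    rw [Xtilde, if_neg hlast, hIP, hshift, hp.erase_image_eq_insert_inter ha hlast,
      prod_insert fun h => hlast (mem_insert_of_mem (mem_inter.1 h).1)]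

theorem IsPathFrom.weight_eq (hp : IsPathFrom E T a v) (ha : a ∉ T) (ht : IsTrajectory f a v) :
    weight (insert a T) f = weight (T \ univ.image v) f *
      (Xtilde (insert a T) (v (Fin.last m)) * ∏ t ∈ T ∩ univ.image v, X (Sum.inr t)) := by
  rw [weight, ← prod_inter_mul_prod_sdiff (insert a T) (univ.image v),
    insert_sdiff_of_mem T hp.mem_image, ← weight, ← weight, hp.weight_inter_image ha ht, mul_comm]

theorem IsPathFrom.YY_sdiff_mul (hp : IsPathFrom E T a v) (ha : a ∉ T) :
    YY E (T \ univ.image v) * φ (Xtilde (insert a T) (v (Fin.last m))) =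
      φ (∑ f ∈ univ.filter (fun f => IsAcyclicFun E (insert a T) f ∧ IsTrajectory f a v),
        weight (insert a T) f) / φ (∏ t ∈ T, X (Sum.inr t)) := by
  rw [sum_congr rfl fun f hf => hp.weight_eq ha (mem_filter.1 hf).2.2, ← sum_mul,
    hp.sum_weight_fiber, YY, prod_XX, ← prod_inter_mul_prod_sdiff T (univ.image v)]
  have h1 : φ (∏ t ∈ T ∩ univ.image v, X (Sum.inr t)) ≠ 0 :=
    algebraMap_ne_zero (prod_ne_zero_iff.2 fun _ _ => X_ne_zero _)
  have h2 : φ (∏ t ∈ T \ univ.image v, X (Sum.inr t)) ≠ 0 :=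
    algebraMap_ne_zero (prod_ne_zero_iff.2 fun _ _ => X_ne_zero _)
  simp only [map_mul]
  field_simp

/-- An acyclic function on `insert a T` splits uniquely into the path it traces from `a`
and an acyclic function on the rest of `T`. -/
theorem Ynum_insert_eq_sum_paths (T : Finset (Fin n)) (a : Fin n) :
    Ynum E (insert a T) = ∑ m ∈ range (n + 1), ∑ v : Fin (m + 1) → Fin n,
      if IsPathFrom E T a v then
        ∑ f ∈ univ.filter (fun f => IsAcyclicFun E (insert a T) f ∧ IsTrajectory f a v),
          weight (insert a T) f
      else 0 := by
  have hterm : ∀ m (v : Fin (m + 1) → Fin n),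
      (if IsPathFrom E T a v then
        ∑ f ∈ univ.filter (fun f => IsAcyclicFun E (insert a T) f ∧ IsTrajectory f a v),
          weight (insert a T) f
      else 0) = ∑ f ∈ univ.filter (IsAcyclicFun E (insert a T)),
        if IsPathFrom E T a v ∧ IsTrajectory f a v then weight (insert a T) f else 0 := by
    intro m v
    rw [← filter_filter, sum_filter]
    split_ifs with hp <;> simp [hp]
  simp only [hterm]
  rw [Ynum_eq_sum_weight, sum_congr rfl fun m _ => sum_comm, sum_comm]
  exact sum_congr rfl fun f hf => ((mem_filter.1 hf).2.sum_ite_isPathFrom_isTrajectory _).symm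

theorem sum_PP_mul (c : Fin n → Kn n) :
    ∑ j, PP E T a j * c j = ∑ m ∈ range (n + 1), ∑ v : Fin (m + 1) → Fin n,
      if IsPathFrom E T a v then YY E (T \ univ.image v) * c (v (Fin.last m)) else 0 := by
  simp only [PP, sum_mul]
  rw [sum_comm]
  refine sum_congr rfl fun m _ => ?_
  rw [sum_comm]
  refine sum_congr rfl fun v _ => ?_
  have hcond : ∀ j, (Function.Injective v ∧ v 0 = a ∧ v (Fin.last m) = j ∧
      (∀ r : Fin m, E (v r.castSucc) (v r.succ)) ∧
      (∀ r : Fin (m + 1), r ≠ 0 → r ≠ Fin.last m → v r ∈ T)) ↔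
      IsPathFrom E T a v ∧ v (Fin.last m) = j := fun j =>
    ⟨fun ⟨h1, h2, h3, h4, h5⟩ => ⟨⟨h1, h2, h4, h5⟩, h3⟩,
      fun ⟨⟨h1, h2, h4, h5⟩, h3⟩ => ⟨h1, h2, h3, h4, h5⟩⟩
  simp only [ite_mul, zero_mul]
  rw [sum_congr rfl fun j _ => if_congr (hcond j) rfl rfl]
  simp only [ite_and]
  split_ifs <;> simp

theorem sum_PP_mul_XX_add_sum_PP_mul_AA (ha : a ∉ T) :
    (∑ j ∈ (insert a T)ᶜ, PP E T a j * XX j) + ∑ j ∈ insert a T, PP E T a j * AA j =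
      XX a * YY E (insert a T) := by
  have hXtilde : (∑ j ∈ (insert a T)ᶜ, PP E T a j * XX j) + ∑ j ∈ insert a T, PP E T a j * AA j
      = ∑ j, PP E T a j * φ (Xtilde (insert a T) j) := by
    rw [← sum_add_sum_compl (insert a T), add_comm]
    congr 1 <;> refine sum_congr rfl fun j hj => ?_
    · rw [Xtilde, if_pos hj, AA]
    · rw [Xtilde, if_neg (mem_compl.1 hj), XX]
  have hXa : XX a ≠ 0 := algebraMap_ne_zero (X_ne_zero _)
  rw [hXtilde, sum_PP_mul, YY, prod_insert ha, prod_XX, ← mul_div_assoc,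
    mul_div_mul_left _ _ hXa, Ynum_insert_eq_sum_paths T a, map_sum, sum_div]
  refine sum_congr rfl fun m _ => ?_
  rw [map_sum, sum_div]
  refine sum_congr rfl fun v _ => ?_
  split_ifs with hp
  · exact hp.YY_sdiff_mul ha
  · simp

end PathExpansion

theorem PP_mem_closure {n : ℕ} (E : Fin n → Fin n → Prop) (T : Finset (Fin n)) (a j : Fin n) :
    PP E T a j ∈ Subring.closure {y : Kn n | ∃ U ⊆ T, y = YY E U} :=
  Subring.sum_mem _ fun m _ => Subring.sum_mem _ fun v _ => by
    split_ifs
    · exact Subring.subset_closure ⟨_, sdiff_subset, rfl⟩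
    · exact Subring.zero_mem _

theorem stmt10_general (n : ℕ) (E : Fin n → Fin n → Prop)
    (S : Finset (Fin n)) (i : Fin n) (hi : i ∉ S) :
    ((∑ j ∈ (insert i S)ᶜ, PP E S i j * XX j) +
        (∑ j ∈ insert i S, PP E S i j * AA j)) / YY E (ominus E S i)
      ∈ Subring.closure
        (Set.range (XX (n := n)) ∪ Set.range (AA (n := n)) ∪
          {y : Kn n | ∃ T ⊆ S, y = YY E T}) := by
  set T := (oplus E S i).erase i
  have hT : insert i T = oplus E S i := insert_erase mem_oplus_self
  rw [sum_PP_mul_XX_add_sum_PP_mul_AA hi, YY_insert_eq_YY_oplus_mul_YY_ominus, ← mul_assoc,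
    mul_div_cancel_right₀ _ YY_ne_zero, ← hT, ← sum_PP_mul_XX_add_sum_PP_mul_AA (notMem_erase i _)]
  have hPP : ∀ j, PP E T i j ∈ Subring.closure
      (Set.range (XX (n := n)) ∪ Set.range (AA (n := n)) ∪ {y : Kn n | ∃ T ⊆ S, y = YY E T}) :=
    fun j => Subring.closure_mono (fun _ ⟨U, hU, hy⟩ => .inr ⟨U, hU.trans erase_oplus_subset, hy⟩ :
      {y : Kn n | ∃ U ⊆ T, y = YY E U} ⊆ _) (PP_mem_closure E T i j)
  exact add_mem (sum_mem fun j _ => mul_mem (hPP j) (Subring.subset_closure (.inl (.inl ⟨j, rfl⟩))))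
    (sum_mem fun j _ => mul_mem (hPP j) (Subring.subset_closure (.inl (.inr ⟨j, rfl⟩))))

/-- For `i ∉ S`, the rational function
`(Σ_{j ∉ S∪{i}} P_S^{i,j} X_j + Σ_{j ∈ S∪{i}} P_S^{i,j} A_j) / Y_{S⊖i}` lies in the subring
of the ambient field generated by the `X_j`, the `A_j`, and the `Y_T` for `T ⊆ S`. -/
theorem stmt10 (n : ℕ) (E : Fin n → Fin n → Prop) (hE : ∀ i, ¬ E i i)
    (S : Finset (Fin n)) (i : Fin n) (hi : i ∉ S) :
    ((∑ j ∈ (insert i S)ᶜ, PP E S i j * XX j) +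
        (∑ j ∈ insert i S, PP E S i j * AA j)) / YY E (ominus E S i)
      ∈ Subring.closure
        (Set.range (XX (n := n)) ∪ Set.range (AA (n := n)) ∪
          {y : Kn n | ∃ T ⊆ S, y = YY E T}) :=
  stmt10_general n E S i hi
end

section
/- Let Γ = P_n be the directed path on [n], with edges i → i+1 for 1 ≤ i ≤ n−1 and i → i−1 for 2 ≤ i ≤ n. Let 1 ≤ a ≤ i < j ≤ b ≤ n be integers, and set I = [a, i−1], J = [i+1, j−1], K = [j+1, b] (any of which may be empty, with Y_∅ = 1). Then Y_{[a, j−1]} · Y_{[i+1, b]} = Y_{[i+1, j−1]} · Y_{[a, b]} + Y_{[a, i−1]} · Y_{[j+1, b]}; that is, Y_{I∪{i}∪J} · Y_{J∪{j}∪K} = Y_J · Y_{I∪{i}∪J∪{j}∪K} + Y_I · Y_K. -/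
open MvPolynomial

/-- The doubly directed path `P_n` on `[n]`: edges between consecutive vertices, in both
directions. -/
def pathE (n : ℕ) : Fin n → Fin n → Prop :=
  fun x y => (y : ℕ) = (x : ℕ) + 1 ∨ (x : ℕ) = (y : ℕ) + 1

namespace Stmt15

open Finset

variable {n : ℕ}

/-- The weight of a function on a finset. -/
noncomputable def wt (I : Finset (Fin n)) (f : Fin n → Fin n) : MvPolynomial (Fin n ⊕ Fin n) ℤ :=
  ∏ i ∈ I, if f i = i then X (Sum.inl i) else X (Sum.inr (f i))

/-- The validity predicate, with acyclicity replaced by the absence of 2-cycles. -/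
def Valid (I : Finset (Fin n)) (f : Fin n → Fin n) : Prop :=
  (∀ i, i ∉ I → f i = i) ∧ (∀ i ∈ I, f i = i ∨ pathE n i (f i)) ∧
    (∀ x ∈ I, f (f x) = x → f x = x)

lemma acyclic_iff (I : Finset (Fin n)) (f : Fin n → Fin n)
    (h0 : ∀ i, i ∉ I → f i = i) (hE : ∀ i ∈ I, f i = i ∨ pathE n i (f i)) :
    IsAcyclicOn I f ↔ ∀ x ∈ I, f (f x) = x → f x = x := by
  constructor
  · intro hA x hx hff
    by_contra hne
    have hfxI : f x ∈ I := by
      by_contra hfx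
      exact hne ((h0 _ hfx).symm.trans hff)
    refine hne (hA x hx 2 (by norm_num) ?_ ?_)
    · intro r hr
      interval_cases r
      · simpa using hx
      · simpa using hfxI
    · show f (f^[1] x) = x
      simpa using hff
  · intro h2 i hi k hk horb hret
    by_contra hne
    have horbI : ∀ r, r ≤ k → f^[r] i ∈ I := by
      intro r hr
      rcases eq_or_lt_of_le hr with rfl | h
      · rwa [hret]
      · exact horb r h
    have hnofix : ∀ r < k, f (f^[r] i) ≠ f^[r] i := by
      intro r hr hfix
      apply hne
      have h1 : f^[k] i = f^[r] i := by
        have hh : f^[(k-r)+r] i = f^[r] i := by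
          rw [Function.iterate_add_apply]
          exact Function.iterate_fixed hfix _
        rw [show k = (k-r)+r by omega]
        exact hh
      have h3 : f^[r] i = i := h1.symm.trans hret
      calc f i = f (f^[r] i) := by rw [h3]
        _ = f^[r] i := hfix
        _ = i := h3
    have hstep : ∀ r < k, (↑(f^[r+1] i) : ℕ) = ↑(f^[r] i) + 1 ∨
        (↑(f^[r] i) : ℕ) = ↑(f^[r+1] i) + 1 := by
      intro r hr
      have h := hE _ (horb r hr)
      rw [Function.iterate_succ_apply']
      rcases h with h | h
      · exact absurd h (hnofix r hr)
      · exact h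
    obtain ⟨r0, hr0k, hmax⟩ := Finset.exists_max_image (Finset.range k)
      (fun r => (↑(f^[r] i) : ℕ)) ⟨0, Finset.mem_range.mpr hk⟩
    rw [Finset.mem_range] at hr0k
    have hbound : ∀ r, r ≤ k → (↑(f^[r] i) : ℕ) ≤ ↑(f^[r0] i) := by
      intro r hr
      rcases eq_or_lt_of_le hr with rfl | h
      · rw [hret]
        exact hmax 0 (Finset.mem_range.mpr hk)
      · exact hmax r (Finset.mem_range.mpr h)
    obtain ⟨p, hpk, hpsucc⟩ : ∃ p, p < k ∧ f^[p+1] i = f^[r0] i := by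
      rcases Nat.eq_zero_or_pos r0 with h | h
      · refine ⟨k - 1, by omega, ?_⟩
        subst h
        simpa [show k - 1 + 1 = k by omega] using hret
      · exact ⟨r0 - 1, by omega, by rw [show r0 - 1 + 1 = r0 by omega]⟩
    -- the maximum M := f^[r0] i satisfies M = (f^[p] i) + 1
    have hM1 : (↑(f^[r0] i) : ℕ) = ↑(f^[p] i) + 1 := by
      rcases hstep p hpk with h | h
      · rw [hpsucc] at h; omega
      · rw [hpsucc] at h
        have := hbound p (le_of_lt hpk)
        omega
    -- and f (f^[r0] i) = f^[p] i
    have hM2 : f^[r0+1] i = f^[p] i := by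
      have hb : (↑(f^[r0+1] i) : ℕ) ≤ ↑(f^[r0] i) := hbound (r0+1) (by omega)
      rcases hstep r0 hr0k with h | h
      · omega
      · exact Fin.ext (by omega)
    have hEq : f (f (f^[p] i)) = f^[p] i := by
      have e1 : f (f^[p] i) = f^[r0] i :=
        (Function.iterate_succ_apply' f p i).symm.trans hpsucc
      have e2 : f (f^[r0] i) = f^[p] i :=
        (Function.iterate_succ_apply' f r0 i).symm.trans hM2
      rw [e1, e2]
    have hfin := h2 _ (horb p hpk) hEq
    have : f^[r0] i = f^[p] i :=
      hpsucc.symm.trans ((Function.iterate_succ_apply' f p i).trans hfin)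
    rw [this] at hM1
    omega
  
open Classical in
lemma Ynum_eq (I : Finset (Fin n)) :
    Ynum (pathE n) I = ∑ f ∈ Finset.univ.filter (Valid I), wt I f := by
  rw [Finset.sum_filter]
  unfold Ynum wt
  refine Finset.sum_congr rfl fun f _ => ?_
  by_cases h : Valid I f
  · rw [if_pos h, if_pos ⟨h.1, h.2.1, (acyclic_iff I f h.1 h.2.1).mpr h.2.2⟩]
  · rw [if_neg h, if_neg]
    rintro ⟨h0, hE, hA⟩
    exact h ⟨h0, hE, (acyclic_iff I f h0 hE).mp hA⟩

/-- Interval of `Fin n` given by natural number bounds, `u ≤ x < v`. -/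
def Iv (n u v : ℕ) : Finset (Fin n) :=
  Finset.univ.filter (fun x => u ≤ (x : ℕ) ∧ (x : ℕ) < v)

@[simp] lemma mem_Iv {u v : ℕ} {x : Fin n} : x ∈ Iv n u v ↔ u ≤ (x : ℕ) ∧ (x : ℕ) < v := by
  simp [Iv]

lemma wt_insert {I : Finset (Fin n)} {β : Fin n} (hβ : β ∉ I) (f : Fin n → Fin n) :
    wt (insert β I) f
      = (if f β = β then X (Sum.inl β) else X (Sum.inr (f β))) * wt I f :=
  Finset.prod_insert hβ

lemma wt_congr {I : Finset (Fin n)} {f g : Fin n → Fin n} (h : ∀ i ∈ I, f i = g i) :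
    wt I f = wt I g := by
  unfold wt
  refine Finset.prod_congr rfl fun i hi => ?_
  rw [h i hi]

lemma wt_update {I : Finset (Fin n)} {β : Fin n} (hβ : β ∉ I) (f : Fin n → Fin n)
    (c : Fin n) : wt I (Function.update f β c) = wt I f :=
  wt_congr fun i hi => by
    have : i ≠ β := fun h => hβ (h ▸ hi)
    exact Function.update_of_ne this _ _

lemma valid_restrict {I : Finset (Fin n)} {β : Fin n} (hβ : β ∉ I)
    {f : Fin n → Fin n} (hf : Valid (insert β I) f) :
    Valid I (Function.update f β β) := by
  obtain ⟨h0, hE, h2⟩ := hf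
  refine ⟨?_, ?_, ?_⟩
  · intro x hx
    by_cases hxβ : x = β
    · subst hxβ; exact Function.update_self _ _ _
    · rw [Function.update_of_ne hxβ]
      exact h0 x (by simp [hx, hxβ])
  · intro x hx
    have hxβ : x ≠ β := fun h => hβ (h ▸ hx)
    rw [Function.update_of_ne hxβ]
    exact hE x (Finset.mem_insert_of_mem hx)
  · intro x hx
    have hxβ : x ≠ β := fun h => hβ (h ▸ hx)
    rw [Function.update_of_ne hxβ]
    by_cases hfx : f x = β
    · rw [hfx, Function.update_self]
      intro h; exact absurd h.symm hxβ
    · rw [Function.update_of_ne hfx]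
      exact h2 x (Finset.mem_insert_of_mem hx)

lemma valid_extend_out {I : Finset (Fin n)} {β c : Fin n} (hβ : β ∉ I)
    (hc : pathE n β c) (hcβ : c ≠ β) (hcI : c ∉ I)
    {g : Fin n → Fin n} (hg : Valid I g) :
    Valid (insert β I) (Function.update g β c) := by
  obtain ⟨h0, hE, h2⟩ := hg
  have hgc : g c = c := h0 c hcI
  refine ⟨?_, ?_, ?_⟩
  · intro x hx
    simp only [Finset.mem_insert, not_or] at hx
    rw [Function.update_of_ne hx.1]
    exact h0 x hx.2
  · intro x hx
    rcases Finset.mem_insert.mp hx with rfl | hx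
    · rw [Function.update_self]; exact Or.inr hc
    · have hxβ : x ≠ β := fun h => hβ (h ▸ hx)
      rw [Function.update_of_ne hxβ]
      exact hE x hx
  · intro x hx
    rcases Finset.mem_insert.mp hx with rfl | hx
    · rw [Function.update_self, Function.update_of_ne hcβ, hgc]
      intro h; exact absurd h hcβ
    · have hxβ : x ≠ β := fun h => hβ (h ▸ hx)
      rw [Function.update_of_ne hxβ]
      by_cases hgx : g x = β
      · rw [hgx, Function.update_self]
        intro h
        exact absurd (h.symm ▸ hx : c ∈ I) hcI
      · rw [Function.update_of_ne hgx]
        exact h2 x hx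

lemma valid_extend_in {I : Finset (Fin n)} {β c : Fin n} (hβ : β ∉ I)
    (hc : pathE n β c) (hcβ : c ≠ β) (hcI : c ∈ I)
    {g : Fin n → Fin n} (hgc : g c ≠ β) (hg : Valid I g) :
    Valid (insert β I) (Function.update g β c) := by
  obtain ⟨h0, hE, h2⟩ := hg
  refine ⟨?_, ?_, ?_⟩
  · intro x hx
    simp only [Finset.mem_insert, not_or] at hx
    rw [Function.update_of_ne hx.1]
    exact h0 x hx.2
  · intro x hx
    rcases Finset.mem_insert.mp hx with rfl | hx
    · rw [Function.update_self]; exact Or.inr hc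
    · have hxβ : x ≠ β := fun h => hβ (h ▸ hx)
      rw [Function.update_of_ne hxβ]
      exact hE x hx
  · intro x hx
    rcases Finset.mem_insert.mp hx with rfl | hx
    · rw [Function.update_self, Function.update_of_ne hcβ]
      intro h; exact absurd h hgc
    · have hxβ : x ≠ β := fun h => hβ (h ▸ hx)
      rw [Function.update_of_ne hxβ]
      by_cases hgx : g x = β
      · rw [hgx, Function.update_self]
        intro h
        exact absurd ((h ▸ hgx : g c = β)) hgc
      · rw [Function.update_of_ne hgx]
        exact h2 x hx

lemma Ynum_empty : Ynum (pathE n) (∅ : Finset (Fin n)) = 1 := by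
  classical
  rw [Ynum_eq]
  have h : Finset.univ.filter (Valid (∅ : Finset (Fin n))) = {id} := by
    ext f
    simp only [Finset.mem_filter, Finset.mem_univ, true_and, Finset.mem_singleton]
    constructor
    · intro h; funext x; exact h.1 x (Finset.notMem_empty x)
    · rintro rfl
      exact ⟨fun i _ => rfl, fun i hi => absurd hi (Finset.notMem_empty i),
        fun x hx => absurd hx (Finset.notMem_empty x)⟩
  rw [h, Finset.sum_singleton]
  simp [wt]

lemma Iv_notMem {u v : ℕ} {β : Fin n} (hβv : (β : ℕ) = v - 1) :
    β ∉ Iv n u (v - 1) := by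
  simp only [mem_Iv, not_and, not_lt, hβv]
  omega

lemma Iv_insert {u v : ℕ} (huv : u + 1 ≤ v) {β : Fin n} (hβv : (β : ℕ) = v - 1)
    (hvn : v ≤ n) : Iv n u v = insert β (Iv n u (v - 1)) := by
  ext x
  simp only [mem_Iv, Finset.mem_insert, Fin.ext_iff, hβv]
  omega

open Classical in
lemma sumP1 (u v : ℕ) (huv : u + 1 ≤ v) (hvn : v ≤ n) (β : Fin n)
    (hβv : (β : ℕ) = v - 1) :
    ∑ f ∈ Finset.univ.filter (fun f : Fin n → Fin n =>
        Valid (Iv n u v) f ∧ f β = β), wt (Iv n u v) f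
      = X (Sum.inl β) * Ynum (pathE n) (Iv n u (v-1)) := by
  have hβ : β ∉ Iv n u (v-1) := Iv_notMem hβv
  have hI : Iv n u v = insert β (Iv n u (v-1)) := Iv_insert huv hβv hvn
  have hiff : ∀ f : Fin n → Fin n,
      (Valid (Iv n u v) f ∧ f β = β) ↔ Valid (Iv n u (v-1)) f := by
    intro f
    constructor
    · rintro ⟨⟨h0, hE, h2⟩, hfβ⟩
      refine ⟨?_, ?_, ?_⟩
      · intro x hx
        by_cases hxβ : x = β
        · subst hxβ; exact hfβ
        · exact h0 x (by rw [hI]; simp [hx, hxβ])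
      · intro x hx
        exact hE x (by rw [hI]; exact Finset.mem_insert_of_mem hx)
      · intro x hx
        exact h2 x (by rw [hI]; exact Finset.mem_insert_of_mem hx)
    · intro hg
      have hgβ : f β = β := hg.1 β hβ
      refine ⟨⟨?_, ?_, ?_⟩, hgβ⟩
      · intro x hx
        refine hg.1 x fun hx' => hx ?_
        rw [hI]; exact Finset.mem_insert_of_mem hx'
      · intro x hx
        rw [hI] at hx
        rcases Finset.mem_insert.mp hx with rfl | hx
        · exact Or.inl hgβ
        · exact hg.2.1 x hx
      · intro x hx
        rw [hI] at hx
        rcases Finset.mem_insert.mp hx with rfl | hx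
        · intro _; exact hgβ
        · exact hg.2.2 x hx
  rw [Finset.filter_congr (fun f _ => hiff f), Ynum_eq, Finset.mul_sum]
  refine Finset.sum_congr rfl fun f hf => ?_
  have hv : Valid (Iv n u (v-1)) f := (Finset.mem_filter.mp hf).2
  rw [hI, wt_insert hβ, if_pos (hv.1 β hβ)]

open Classical in
lemma sumP2 (u v : ℕ) (huv : u + 1 ≤ v) (hvn : v ≤ n) (β γ : Fin n)
    (hβv : (β : ℕ) = v - 1) (hγv : (γ : ℕ) = v) :
    ∑ f ∈ Finset.univ.filter (fun f : Fin n → Fin n =>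
        Valid (Iv n u v) f ∧ ((f β : ℕ) = v)), wt (Iv n u v) f
      = X (Sum.inr γ) * Ynum (pathE n) (Iv n u (v-1)) := by
  have hβ : β ∉ Iv n u (v-1) := Iv_notMem hβv
  have hI : Iv n u v = insert β (Iv n u (v-1)) := Iv_insert huv hβv hvn
  have hγβ : γ ≠ β := by simp only [ne_eq, Fin.ext_iff]; omega
  have hγI : γ ∉ Iv n u (v-1) := by simp only [mem_Iv, not_and, not_lt]; omega
  have hpath : pathE n β γ := Or.inl (by omega)
  rw [Ynum_eq, Finset.mul_sum]
  refine Finset.sum_nbij' (fun f => Function.update f β β)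
    (fun g => Function.update g β γ) ?_ ?_ ?_ ?_ ?_
  · intro f hf
    rw [Finset.mem_filter] at hf ⊢
    have hval := hf.2.1
    rw [hI] at hval
    exact ⟨Finset.mem_univ _, valid_restrict hβ hval⟩
  · intro g hg
    rw [Finset.mem_filter] at hg ⊢
    have hval := valid_extend_out hβ hpath hγβ hγI hg.2
    rw [← hI] at hval
    refine ⟨Finset.mem_univ _, hval, ?_⟩
    simp only [Function.update_self]
    omega
  · intro f hf
    rw [Finset.mem_filter] at hf
    have hfβ : f β = γ := by rw [Fin.ext_iff]; omega
    funext x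
    by_cases hx : x = β
    · subst hx
      simp only [Function.update_self]
      exact hfβ.symm
    · simp only [Function.update_of_ne hx]
  · intro g hg
    rw [Finset.mem_filter] at hg
    funext x
    by_cases hx : x = β
    · subst hx
      simp only [Function.update_self]
      exact (hg.2.1 x hβ).symm
    · simp only [Function.update_of_ne hx]
  · intro f hf
    rw [Finset.mem_filter] at hf
    have hfβ : f β ≠ β := by simp only [ne_eq, Fin.ext_iff]; omega
    have hfβγ : f β = γ := by rw [Fin.ext_iff]; omega
    rw [hI, wt_insert hβ, if_neg hfβ, hfβγ, wt_update hβ]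

open Classical in
lemma sumP3b (u v : ℕ) (huv : u + 2 ≤ v) (hvn : v ≤ n) (β β' : Fin n)
    (hβv : (β : ℕ) = v - 1) (hβ'v : (β' : ℕ) = v - 2) :
    ∑ g ∈ Finset.univ.filter (fun g : Fin n → Fin n =>
        Valid (Iv n u (v-1)) g ∧ g β' = β), wt (Iv n u (v-1)) g
      = X (Sum.inr β) * Ynum (pathE n) (Iv n u (v-2)) := by
  have hβ' : β' ∉ Iv n u (v-2) := by
    simp only [mem_Iv, not_and, not_lt]; omega
  have hI : Iv n u (v-1) = insert β' (Iv n u (v-2)) := by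
    have : v - 1 - 1 = v - 2 := by omega
    have h2 := Iv_insert (n := n) (u := u) (v := v - 1) (by omega)
      (β := β') (by omega) (by omega)
    rwa [this] at h2
  have hββ' : β ≠ β' := by simp only [ne_eq, Fin.ext_iff]; omega
  have hβI : β ∉ Iv n u (v-2) := by
    simp only [mem_Iv, not_and, not_lt]; omega
  have hpath : pathE n β' β := Or.inl (by omega)
  rw [Ynum_eq, Finset.mul_sum]
  refine Finset.sum_nbij' (fun g => Function.update g β' β')
    (fun h => Function.update h β' β) ?_ ?_ ?_ ?_ ?_
  · intro g hg
    rw [Finset.mem_filter] at hg ⊢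
    have hval := hg.2.1
    rw [hI] at hval
    exact ⟨Finset.mem_univ _, valid_restrict hβ' hval⟩
  · intro h hh
    rw [Finset.mem_filter] at hh ⊢
    have hval := valid_extend_out hβ' hpath hββ' hβI hh.2
    rw [← hI] at hval
    exact ⟨Finset.mem_univ _, hval, Function.update_self _ _ _⟩
  · intro g hg
    rw [Finset.mem_filter] at hg
    funext x
    by_cases hx : x = β'
    · subst hx
      simp only [Function.update_self]
      exact hg.2.2.symm
    · simp only [Function.update_of_ne hx]
  · intro h hh
    rw [Finset.mem_filter] at hh
    funext x
    by_cases hx : x = β'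
    · subst hx
      simp only [Function.update_self]
      exact (hh.2.1 x hβ').symm
    · simp only [Function.update_of_ne hx]
  · intro g hg
    rw [Finset.mem_filter] at hg
    have hgβ' : g β' ≠ β' := by rw [hg.2.2]; exact hββ'
    rw [hI, wt_insert hβ', if_neg hgβ', hg.2.2, wt_update hβ']

open Classical in
lemma sumP3 (u v : ℕ) (huv : u + 2 ≤ v) (hvn : v ≤ n) (β β' : Fin n)
    (hβv : (β : ℕ) = v - 1) (hβ'v : (β' : ℕ) = v - 2) :
    ∑ f ∈ Finset.univ.filter (fun f : Fin n → Fin n =>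
        Valid (Iv n u v) f ∧ ((f β : ℕ) = v - 2)), wt (Iv n u v) f
      = X (Sum.inr β') * (Ynum (pathE n) (Iv n u (v-1))
          - X (Sum.inr β) * Ynum (pathE n) (Iv n u (v-2))) := by
  have hβ : β ∉ Iv n u (v-1) := Iv_notMem hβv
  have hI : Iv n u v = insert β (Iv n u (v-1)) := Iv_insert (by omega) hβv hvn
  have hβ'β : β' ≠ β := by simp only [ne_eq, Fin.ext_iff]; omega
  have hβ'I : β' ∈ Iv n u (v-1) := by simp only [mem_Iv]; omega
  have hβmem : β ∈ Iv n u v := by simp only [mem_Iv]; omega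
  have hpath : pathE n β β' := Or.inr (by omega)
  have step1 : ∑ f ∈ Finset.univ.filter (fun f : Fin n → Fin n =>
        Valid (Iv n u v) f ∧ ((f β : ℕ) = v - 2)), wt (Iv n u v) f
      = ∑ g ∈ Finset.univ.filter (fun g : Fin n → Fin n =>
          Valid (Iv n u (v-1)) g ∧ g β' ≠ β),
            X (Sum.inr β') * wt (Iv n u (v-1)) g := by
    refine Finset.sum_nbij' (fun f => Function.update f β β)
      (fun g => Function.update g β β') ?_ ?_ ?_ ?_ ?_
    · intro f hf
      rw [Finset.mem_filter] at hf ⊢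
      obtain ⟨-, hval, hfβ⟩ := hf
      have hfββ' : f β = β' := by rw [Fin.ext_iff]; omega
      have hval' := hval
      rw [hI] at hval'
      refine ⟨Finset.mem_univ _, valid_restrict hβ hval', ?_⟩
      have hne : f β' ≠ β := by
        intro hc
        have h2 := hval.2.2 β hβmem
        rw [hfββ', hc] at h2
        exact hβ'β (h2 rfl)
      simpa only [Function.update_of_ne hβ'β] using hne
    · intro g hg
      rw [Finset.mem_filter] at hg ⊢
      obtain ⟨-, hval, hgβ'⟩ := hg
      have hval' := valid_extend_in hβ hpath hβ'β hβ'I hgβ' hval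
      rw [← hI] at hval'
      refine ⟨Finset.mem_univ _, hval', ?_⟩
      simp only [Function.update_self]
      omega
    · intro f hf
      rw [Finset.mem_filter] at hf
      have hfββ' : f β = β' := by rw [Fin.ext_iff]; omega
      funext x
      by_cases hx : x = β
      · subst hx
        simp only [Function.update_self]
        exact hfββ'.symm
      · simp only [Function.update_of_ne hx]
    · intro g hg
      rw [Finset.mem_filter] at hg
      funext x
      by_cases hx : x = β
      · subst hx
        simp only [Function.update_self]
        exact (hg.2.1.1 x hβ).symm
      · simp only [Function.update_of_ne hx]
    · intro f hf
      rw [Finset.mem_filter] at hf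
      have hfβ : f β ≠ β := by simp only [ne_eq, Fin.ext_iff]; omega
      have hfββ' : f β = β' := by rw [Fin.ext_iff]; omega
      rw [hI, wt_insert hβ, if_neg hfβ, hfββ', wt_update hβ]
  rw [step1, ← Finset.mul_sum]
  congr 1
  have hsplit := Finset.sum_filter_add_sum_filter_not
    (Finset.univ.filter (Valid (Iv n u (v-1)))) (fun g => g β' = β)
    (wt (Iv n u (v-1)))
  rw [Finset.filter_filter, Finset.filter_filter] at hsplit
  rw [sumP3b u v huv hvn β β' hβv hβ'v] at hsplit
  rw [← Ynum_eq] at hsplit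
  have : ∀ (p q r : MvPolynomial (Fin n ⊕ Fin n) ℤ), q + p = r → p = r - q := by
    intro p q r h; rw [← h]; ring
  exact this _ _ _ hsplit

open Classical in
lemma Ynum_rec (u v : ℕ) (huv : u + 2 ≤ v) (hvn : v ≤ n) (β β' : Fin n)
    (hβv : (β : ℕ) = v - 1) (hβ'v : (β' : ℕ) = v - 2) :
    Ynum (pathE n) (Iv n u v)
      = (X (Sum.inl β)
          + (if h : v < n then X (Sum.inr (⟨v, h⟩ : Fin n)) else 0)
          + X (Sum.inr β')) * Ynum (pathE n) (Iv n u (v-1))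
        - X (Sum.inr β') * X (Sum.inr β) * Ynum (pathE n) (Iv n u (v-2)) := by
  have hβmem : β ∈ Iv n u v := by simp only [mem_Iv]; omega
  rw [Ynum_eq]
  have hs1 := Finset.sum_filter_add_sum_filter_not
    (Finset.univ.filter (Valid (Iv n u v))) (fun f => f β = β) (wt (Iv n u v))
  rw [Finset.filter_filter, Finset.filter_filter] at hs1
  have hs2 := Finset.sum_filter_add_sum_filter_not
    (Finset.univ.filter (fun f : Fin n → Fin n => Valid (Iv n u v) f ∧ ¬ f β = β))
    (fun f => ((f β : ℕ) = v)) (wt (Iv n u v))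
  rw [Finset.filter_filter, Finset.filter_filter] at hs2
  have e1 : Finset.univ.filter
        (fun f : Fin n → Fin n => (Valid (Iv n u v) f ∧ ¬ f β = β) ∧ ((f β : ℕ) = v))
      = Finset.univ.filter
        (fun f : Fin n → Fin n => Valid (Iv n u v) f ∧ ((f β : ℕ) = v)) := by
    refine Finset.filter_congr fun f _ => ?_
    constructor
    · rintro ⟨⟨h1, _⟩, h3⟩; exact ⟨h1, h3⟩
    · rintro ⟨h1, h3⟩
      refine ⟨⟨h1, fun hc => ?_⟩, h3⟩
      rw [hc] at h3; omega
  have e2 : Finset.univ.filter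
        (fun f : Fin n → Fin n => (Valid (Iv n u v) f ∧ ¬ f β = β) ∧ ¬ ((f β : ℕ) = v))
      = Finset.univ.filter
        (fun f : Fin n → Fin n => Valid (Iv n u v) f ∧ ((f β : ℕ) = v - 2)) := by
    refine Finset.filter_congr fun f _ => ?_
    constructor
    · rintro ⟨⟨h1, h2⟩, h3⟩
      refine ⟨h1, ?_⟩
      rcases h1.2.1 β hβmem with hc | hc
      · exact absurd hc h2
      · rcases hc with hc | hc <;> omega
    · rintro ⟨h1, h3⟩
      have hne : f β ≠ β := by simp only [ne_eq, Fin.ext_iff]; omega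
      exact ⟨⟨h1, hne⟩, by omega⟩
  rw [e1, e2] at hs2
  rw [← hs1, ← hs2]
  rw [sumP1 u v (by omega) hvn β hβv,
    sumP3 u v huv hvn β β' hβv hβ'v]
  by_cases h : v < n
  · rw [dif_pos h, sumP2 u v (by omega) hvn β ⟨v, h⟩ hβv rfl]
    ring
  · rw [dif_neg h]
    have hempty : Finset.univ.filter
        (fun f : Fin n → Fin n => Valid (Iv n u v) f ∧ ((f β : ℕ) = v)) = ∅ := by
      refine Finset.filter_false_of_mem ?_
      rintro f - ⟨-, hfv⟩
      have := (f β).isLt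
      omega
    rw [hempty, Finset.sum_empty]
    ring

open Classical in
lemma Ynum_singleton (c : Fin n) :
    Ynum (pathE n) {c}
      = X (Sum.inl c)
        + (if h : (c:ℕ)+1 < n then X (Sum.inr (⟨(c:ℕ)+1, h⟩ : Fin n)) else 0)
        + (if h : 1 ≤ (c:ℕ) then
            X (Sum.inr (⟨(c:ℕ)-1, lt_of_le_of_lt (Nat.sub_le _ _) c.isLt⟩ : Fin n))
          else 0) := by
  rw [Ynum_eq]
  have step1 : ∑ f ∈ Finset.univ.filter (Valid ({c} : Finset (Fin n))), wt {c} f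
      = ∑ z ∈ Finset.univ.filter (fun z : Fin n => z = c ∨ pathE n c z),
          (if z = c then X (Sum.inl c) else X (Sum.inr z)) := by
    refine Finset.sum_nbij' (fun f => f c) (fun z => Function.update id c z)
      ?_ ?_ ?_ ?_ ?_
    · intro f hf
      rw [Finset.mem_filter] at hf ⊢
      exact ⟨Finset.mem_univ _, hf.2.2.1 c (Finset.mem_singleton_self c)⟩
    · intro z hz
      rw [Finset.mem_filter] at hz ⊢
      refine ⟨Finset.mem_univ _, ?_, ?_, ?_⟩
      · intro x hx
        have hxc : x ≠ c := by simpa using hx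
        show Function.update id c z x = x
        rw [Function.update_of_ne hxc]; rfl
      · intro x hx
        rw [Finset.mem_singleton] at hx
        subst hx
        show Function.update id x z x = x ∨ pathE n x (Function.update id x z x)
        rw [Function.update_self]
        exact hz.2
      · intro x hx
        rw [Finset.mem_singleton] at hx
        subst hx
        show Function.update id x z (Function.update id x z x) = x →
          Function.update id x z x = x
        rw [Function.update_self]
        by_cases hzc : z = x
        · subst hzc
          intro _
          rfl
        · rw [Function.update_of_ne hzc]
          intro h
          exact h
    · intro f hf
      rw [Finset.mem_filter] at hf
      show Function.update id c (f c) = f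
      funext x
      by_cases hx : x = c
      · subst hx; exact Function.update_self _ _ _
      · rw [Function.update_of_ne hx]
        exact (hf.2.1 x (by simpa using hx)).symm
    · intro z hz
      exact Function.update_self _ _ _
    · intro f hf
      rw [wt, Finset.prod_singleton]
  rw [step1, Finset.sum_filter]
  have step2 : ∀ z : Fin n,
      (if z = c ∨ pathE n c z then (if z = c then X (Sum.inl c) else X (Sum.inr z)) else 0)
        = (if z = c then X (Sum.inl c) else (0:MvPolynomial (Fin n ⊕ Fin n) ℤ))
          + (if (z:ℕ) = (c:ℕ)+1 then X (Sum.inr z) else 0)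
          + (if ((z:ℕ)+1 = (c:ℕ)) then X (Sum.inr z) else 0) := by
    intro z
    by_cases h1 : z = c
    · subst h1
      rw [if_pos (Or.inl rfl), if_pos rfl, if_pos rfl,
        if_neg (by omega), if_neg (by omega)]
      ring
    · rw [if_neg h1]
      by_cases h2 : (z:ℕ) = (c:ℕ)+1
      · have hp : pathE n c z := Or.inl h2
        rw [if_pos (Or.inr hp), if_neg h1, if_pos h2,
          if_neg (by omega : ¬((z:ℕ)+1 = (c:ℕ)))]
        ring
      · by_cases h3 : (z:ℕ)+1 = (c:ℕ)
        · have hp : pathE n c z := Or.inr h3.symm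
          rw [if_pos (Or.inr hp), if_neg h1, if_neg h2, if_pos h3]
          ring
        · rw [if_neg ?_, if_neg h1, if_neg h2, if_neg h3]
          · ring
          · rintro (hc | hc | hc)
            · exact h1 hc
            · exact h2 hc
            · exact h3 hc.symm
  rw [Finset.sum_congr rfl fun z _ => step2 z]
  rw [Finset.sum_add_distrib, Finset.sum_add_distrib]
  congr 1
  · congr 1
    · rw [Finset.sum_ite_eq' Finset.univ c (fun _ => X (Sum.inl c))]
      simp
    · by_cases h : (c:ℕ)+1 < n
      · rw [dif_pos h]
        have hcong : ∀ z : Fin n,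
            (if (z:ℕ) = (c:ℕ)+1 then X (Sum.inr z) else (0:MvPolynomial (Fin n ⊕ Fin n) ℤ))
              = (if z = (⟨(c:ℕ)+1, h⟩ : Fin n) then X (Sum.inr z) else 0) := by
          intro z
          refine if_congr ?_ rfl rfl
          rw [Fin.ext_iff]
        rw [Finset.sum_congr rfl fun z _ => hcong z,
          Finset.sum_ite_eq' Finset.univ _ (fun z => X (Sum.inr z))]
        simp
      · rw [dif_neg h]
        refine Finset.sum_eq_zero fun z _ => ?_
        rw [if_neg ?_]
        have := z.isLt
        omega
  · by_cases h : 1 ≤ (c:ℕ)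
    · rw [dif_pos h]
      have hcong : ∀ z : Fin n,
          (if (z:ℕ)+1 = (c:ℕ) then X (Sum.inr z) else (0:MvPolynomial (Fin n ⊕ Fin n) ℤ))
            = (if z = (⟨(c:ℕ)-1, lt_of_le_of_lt (Nat.sub_le _ _) c.isLt⟩ : Fin n)
                then X (Sum.inr z) else 0) := by
        intro z
        refine if_congr ?_ rfl rfl
        rw [Fin.ext_iff]
        constructor <;> (intro hh; simp only [] at hh ⊢; omega)
      rw [Finset.sum_congr rfl fun z _ => hcong z,
        Finset.sum_ite_eq' Finset.univ _ (fun z => X (Sum.inr z))]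
      simp
    · rw [dif_neg h]
      refine Finset.sum_eq_zero fun z _ => ?_
      rw [if_neg ?_]
      omega

lemma XX_ne_zero (i : Fin n) : XX i ≠ 0 := by
  unfold XX
  rw [map_ne_zero_iff _ (IsFractionRing.injective (MvPolynomial (Fin n ⊕ Fin n) ℤ) (Kn n))]
  exact MvPolynomial.X_ne_zero _

lemma prodXX_ne_zero (I : Finset (Fin n)) : (∏ i ∈ I, XX i) ≠ 0 :=
  Finset.prod_ne_zero_iff.mpr fun i _ => XX_ne_zero i

lemma YY_empty : YY (pathE n) (∅ : Finset (Fin n)) = 1 := by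
  unfold YY
  rw [Ynum_empty, Finset.prod_empty, map_one, div_one]

/-- The diagonal entry `Y_{{k}}`, as a function of a natural number index. -/
noncomputable def yy (n : ℕ) (k : ℕ) : Kn n :=
  if h : k < n then YY (pathE n) {(⟨k, h⟩ : Fin n)} else 1

/-- The continuant associated to the interval `[u, v)`. -/
noncomputable def Zc (n : ℕ) (u : ℕ) (v : ℕ) : Kn n :=
  if v ≤ u then (if u = v + 1 then 0 else 1)
  else yy n (v-1) * Zc n u (v-1) - (if u + 2 ≤ v then Zc n u (v-2) else 0)
termination_by v
decreasing_by all_goals omega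

lemma Zc_of_le {u v : ℕ} (h : v ≤ u) :
    Zc n u v = if u = v + 1 then 0 else 1 := by
  rw [Zc, if_pos h]

lemma Zc_empty {u : ℕ} : Zc n u u = 1 := by
  rw [Zc_of_le le_rfl, if_neg (by omega)]

lemma Zc_zero {u v : ℕ} (h : u = v + 1) : Zc n u v = 0 := by
  rw [Zc_of_le (by omega), if_pos h]

lemma Zc_single' {u v : ℕ} (h : v = u + 1) : Zc n u v = yy n u := by
  subst h
  rw [Zc, if_neg (by omega), if_neg (by omega)]
  rw [show u + 1 - 1 = u from rfl, Zc_empty]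
  ring

lemma Zc_rec {u v : ℕ} (h : u + 2 ≤ v) :
    Zc n u v = yy n (v-1) * Zc n u (v-1) - Zc n u (v-2) := by
  rw [Zc, if_neg (by omega), if_pos h]

lemma Zc_rec' {u v : ℕ} (h : u + 1 ≤ v) (h' : 1 ≤ u ∨ u + 2 ≤ v) :
    Zc n u v = yy n (v-1) * Zc n u (v-1) - Zc n u (v-2) := by
  rcases Nat.lt_or_ge v (u+2) with hv | hv
  · have hveq : v = u + 1 := by omega
    have hu : 1 ≤ u := by omega
    rw [Zc_single' hveq, hveq, show u + 1 - 1 = u from rfl,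
      show u + 1 - 2 = u - 1 by omega, Zc_empty, Zc_zero (by omega : u = (u-1) + 1)]
    ring
  · exact Zc_rec hv

lemma Zc_left (u : ℕ) : ∀ v, u + 1 ≤ v →
    Zc n u v = yy n u * Zc n (u+1) v - Zc n (u+2) v := by
  intro v
  induction v using Nat.strong_induction_on with
  | _ v ih =>
    intro h
    rcases eq_or_lt_of_le h with heq | hlt
    · subst heq
      rw [Zc_single' rfl, Zc_empty, Zc_zero (by omega)]
      ring
    · rcases eq_or_lt_of_le (show u + 2 ≤ v by omega) with heq2 | hlt2
      · subst heq2
        rw [Zc_rec (by omega), show u + 2 - 1 = u + 1 from rfl,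
          show u + 2 - 2 = u from rfl, Zc_single' rfl, Zc_empty,
          Zc_single' (rfl : u + 2 = (u+1) + 1), Zc_empty]
        ring
      · rw [Zc_rec (by omega), ih (v-1) (by omega) (by omega),
          ih (v-2) (by omega) (by omega),
          Zc_rec' (show (u+1) + 1 ≤ v by omega) (Or.inl (by omega)),
          Zc_rec' (show (u+2) + 1 ≤ v by omega) (Or.inl (by omega))]
        ring

lemma Zc_split (u m : ℕ) (hum : u ≤ m) : ∀ v, m + 1 ≤ v →
    Zc n u v = Zc n u (m+1) * Zc n (m+1) v - Zc n u m * Zc n (m+2) v := by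
  intro v
  induction v using Nat.strong_induction_on with
  | _ v ih =>
    intro h
    rcases eq_or_lt_of_le h with heq | hlt
    · subst heq
      rw [Zc_empty, Zc_zero (by omega : m + 2 = (m+1) + 1)]
      ring
    · rcases eq_or_lt_of_le (show m + 2 ≤ v by omega) with heq2 | hlt2
      · subst heq2
        rw [Zc_rec (by omega), show m + 2 - 1 = m + 1 from rfl,
          show m + 2 - 2 = m from rfl,
          Zc_single' (rfl : m + 2 = (m+1) + 1), Zc_empty]
        ring
      · rw [Zc_rec (by omega), ih (v-1) (by omega) (by omega),
          ih (v-2) (by omega) (by omega),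
          Zc_rec' (show (m+1) + 1 ≤ v by omega) (Or.inl (by omega)),
          Zc_rec' (show (m+2) + 1 ≤ v by omega) (Or.inl (by omega))]
        ring

lemma Zc_main (A I B : ℕ) (hAI : A ≤ I) (hIB : I ≤ B) : ∀ c, I ≤ c → c ≤ B + 1 →
    Zc n A c * Zc n (I+1) (B+1) = Zc n (I+1) c * Zc n A (B+1) + Zc n A I * Zc n (c+1) (B+1) := by
  intro c
  induction c using Nat.strong_induction_on with
  | _ c ih =>
    intro hIc hcB
    rcases eq_or_lt_of_le hIc with heq | hlt
    · subst heq
      rw [Zc_zero (rfl : I + 1 = I + 1)]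
      ring
    · rcases eq_or_lt_of_le (show I + 1 ≤ c by omega) with heq2 | hlt2
      · -- c = I + 1 : the splitting lemma
        have hsplit := Zc_split (n := n) A I hAI (B+1) (by omega)
        subst heq2
        rw [show I + 1 + 1 = I + 2 by omega, Zc_empty, hsplit]
        ring
      · -- step: c ≥ I + 2, use recurrences at c-1
        have h1 : Zc n A c = yy n (c-1) * Zc n A (c-1) - Zc n A (c-2) :=
          Zc_rec' (by omega) (by omega)
        have h2 : Zc n (I+1) c = yy n (c-1) * Zc n (I+1) (c-1) - Zc n (I+1) (c-2) :=
          Zc_rec' (by omega) (Or.inl (by omega))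
        have h3 : Zc n (c-1) (B+1) = yy n (c-1) * Zc n c (B+1) - Zc n (c+1) (B+1) := by
          have := Zc_left (n := n) (c-1) (B+1) (by omega)
          rw [show c - 1 + 1 = c by omega, show c - 1 + 2 = c + 1 by omega] at this
          exact this
        have e1 := ih (c-1) (by omega) (by omega) (by omega)
        have e2 := ih (c-2) (by omega) (by omega) (by omega)
        rw [show c - 2 + 1 = c - 1 by omega] at e2
        rw [show c - 1 + 1 = c by omega] at e1
        -- combine:  G(c) = yy (c-1) G(c-1) - G(c-2)
        rw [h1, h2]
        have key : Zc n A I * Zc n (c+1) (B+1)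
            = yy n (c-1) * (Zc n A I * Zc n c (B+1)) - Zc n A I * Zc n (c-1) (B+1) := by
          rw [h3]; ring
        calc (yy n (c-1) * Zc n A (c-1) - Zc n A (c-2)) * Zc n (I+1) (B+1)
            = yy n (c-1) * (Zc n A (c-1) * Zc n (I+1) (B+1))
              - Zc n A (c-2) * Zc n (I+1) (B+1) := by ring
          _ = yy n (c-1) * (Zc n (I+1) (c-1) * Zc n A (B+1) + Zc n A I * Zc n c (B+1))
              - (Zc n (I+1) (c-2) * Zc n A (B+1) + Zc n A I * Zc n (c-1) (B+1)) := by
              rw [e1, e2]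
          _ = (yy n (c-1) * Zc n (I+1) (c-1) - Zc n (I+1) (c-2)) * Zc n A (B+1)
              + (yy n (c-1) * (Zc n A I * Zc n c (B+1)) - Zc n A I * Zc n (c-1) (B+1)) := by
              ring
          _ = (yy n (c-1) * Zc n (I+1) (c-1) - Zc n (I+1) (c-2)) * Zc n A (B+1)
              + Zc n A I * Zc n (c+1) (B+1) := by rw [← key]

lemma div_helper {K : Type*} [Field K] (s p q b b' pr : K)
    (hb : b ≠ 0) (hb' : b' ≠ 0) (hpr : pr ≠ 0) :
    (s * p - b' * b * q) / (b * (b' * pr)) = s / b * (p / (b' * pr)) - q / pr := by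
  field_simp

lemma Ynum_singleton_abs (v : ℕ) (hv2 : 2 ≤ v) (hvn : v ≤ n) (β β' : Fin n)
    (hβv : (β:ℕ) = v - 1) (hβ'v : (β':ℕ) = v - 2) :
    Ynum (pathE n) {β}
      = X (Sum.inl β) + (if h : v < n then X (Sum.inr (⟨v, h⟩ : Fin n)) else 0)
        + X (Sum.inr β') := by
  rw [Ynum_singleton β]
  congr 1
  · congr 1
    by_cases h : v < n
    · rw [dif_pos (show (β:ℕ)+1 < n by omega), dif_pos h]
      apply congrArg
      apply congrArg
      apply Fin.ext
      show (β:ℕ) + 1 = v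
      omega
    · rw [dif_neg (show ¬((β:ℕ)+1 < n) by omega), dif_neg h]
  · rw [dif_pos (show 1 ≤ (β:ℕ) by omega)]
    apply congrArg
    apply congrArg
    apply Fin.ext
    show (β:ℕ) - 1 = (β':ℕ)
    omega

lemma yy_eq (v : ℕ) (hv2 : 2 ≤ v) (hvn : v ≤ n) (β β' : Fin n)
    (hβv : (β:ℕ) = v - 1) (hβ'v : (β':ℕ) = v - 2) :
    yy n (v-1) = algebraMap (MvPolynomial (Fin n ⊕ Fin n) ℤ) (Kn n)
      (X (Sum.inl β) + (if h : v < n then X (Sum.inr (⟨v, h⟩ : Fin n)) else 0)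
        + X (Sum.inr β')) / XX β := by
  have h1 : v - 1 < n := by omega
  rw [yy, dif_pos h1]
  have hbe : (⟨v-1, h1⟩ : Fin n) = β := by
    apply Fin.ext
    show v - 1 = (β:ℕ)
    omega
  rw [hbe]
  unfold YY
  rw [Finset.prod_singleton, Ynum_singleton_abs v hv2 hvn β β' hβv hβ'v]

lemma YY_rec (u v : ℕ) (huv : u + 2 ≤ v) (hvn : v ≤ n) :
    YY (pathE n) (Iv n u v)
      = yy n (v-1) * YY (pathE n) (Iv n u (v-1)) - YY (pathE n) (Iv n u (v-2)) := by
  obtain ⟨β, hβv⟩ : ∃ β : Fin n, (β:ℕ) = v - 1 := ⟨⟨v-1, by omega⟩, rfl⟩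
  obtain ⟨β', hβ'v⟩ : ∃ β' : Fin n, (β':ℕ) = v - 2 := ⟨⟨v-2, by omega⟩, rfl⟩
  have hProd2 : ∏ i ∈ Iv n u (v-1), XX i = XX β' * ∏ i ∈ Iv n u (v-2), XX i := by
    have hins : Iv n u (v-1) = insert β' (Iv n u (v-2)) := by
      have h2 := Iv_insert (n := n) (u := u) (v := v-1) (by omega) (β := β')
        (by omega) (by omega)
      rwa [show v - 1 - 1 = v - 2 by omega] at h2
    rw [hins, Finset.prod_insert (by simp only [mem_Iv, not_and, not_lt]; omega)]
  unfold YY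
  rw [Ynum_rec u v huv hvn β β' hβv hβ'v,
    Iv_insert (by omega) hβv hvn,
    Finset.prod_insert (Iv_notMem hβv), hProd2,
    yy_eq v (by omega) hvn β β' hβv hβ'v,
    map_sub, map_mul, map_mul, map_mul]
  have hb := XX_ne_zero (n := n) β
  have hb' := XX_ne_zero (n := n) β'
  have hpr := prodXX_ne_zero (n := n) (Iv n u (v-2))
  have e1 : algebraMap (MvPolynomial (Fin n ⊕ Fin n) ℤ) (Kn n) (X (Sum.inr β)) = XX β := rfl
  have e2 : algebraMap (MvPolynomial (Fin n ⊕ Fin n) ℤ) (Kn n) (X (Sum.inr β')) = XX β' := rfl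
  rw [e1, e2]
  exact div_helper _ _ _ _ _ _ hb hb' hpr

lemma Iv_empty {u v : ℕ} (h : v ≤ u) : Iv n u v = ∅ := by
  ext x
  simp only [mem_Iv, Finset.notMem_empty, iff_false, not_and, not_lt]
  omega

lemma Iv_singleton {u : ℕ} (h : u < n) : Iv n u (u+1) = {(⟨u, h⟩ : Fin n)} := by
  ext x
  simp only [mem_Iv, Finset.mem_singleton, Fin.ext_iff]
  omega

lemma bridge : ∀ v, v ≤ n → ∀ u, u ≤ v → YY (pathE n) (Iv n u v) = Zc n u v := by
  intro v
  induction v using Nat.strong_induction_on with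
  | _ v ih =>
    intro hvn u huv
    rcases eq_or_lt_of_le huv with heq | hlt
    · subst heq
      rw [Iv_empty le_rfl, YY_empty, Zc_empty]
    · rcases eq_or_lt_of_le (show u + 1 ≤ v by omega) with heq2 | hlt2
      · subst heq2
        have hun : u < n := by omega
        rw [Iv_singleton hun, Zc_single' rfl, yy, dif_pos hun]
      · rw [YY_rec u v (by omega) hvn, Zc_rec (by omega),
          ih (v-1) (by omega) (by omega) u (by omega),
          ih (v-2) (by omega) (by omega) u (by omega)]

lemma main (A I J B : ℕ) (hAI : A ≤ I) (hIJ : I < J) (hJB : J ≤ B) (hBn : B < n) :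
    YY (pathE n) (Iv n A J) * YY (pathE n) (Iv n (I+1) (B+1))
      = YY (pathE n) (Iv n (I+1) J) * YY (pathE n) (Iv n A (B+1))
        + YY (pathE n) (Iv n A I) * YY (pathE n) (Iv n (J+1) (B+1)) := by
  rw [bridge J (by omega) A (by omega), bridge (B+1) (by omega) (I+1) (by omega),
    bridge J (by omega) (I+1) (by omega), bridge (B+1) (by omega) A (by omega),
    bridge I (by omega) A hAI, bridge (B+1) (by omega) (J+1) (by omega)]
  exact Zc_main A I B hAI (by omega) J (by omega) (by omega)

end Stmt15
/-- For the path `P_n` and `a ≤ i < j ≤ b`: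
`Y_{[a,j−1]} · Y_{[i+1,b]} = Y_{[i+1,j−1]} · Y_{[a,b]} + Y_{[a,i−1]} · Y_{[j+1,b]}`. -/
theorem stmt15 (n : ℕ) (a i j b : Fin n) (ha : a ≤ i) (hij : i < j) (hb : j ≤ b) :
    YY (pathE n) (Finset.Ico a j) * YY (pathE n) (Finset.Ioc i b) =
      YY (pathE n) (Finset.Ioo i j) * YY (pathE n) (Finset.Icc a b) +
        YY (pathE n) (Finset.Ico a i) * YY (pathE n) (Finset.Ioc j b) := by
  have e1 : Finset.Ico a j = Stmt15.Iv n ↑a ↑j := by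
    ext x
    simp only [Finset.mem_Ico, Stmt15.mem_Iv, Fin.le_def, Fin.lt_def]
  have e2 : Finset.Ioc i b = Stmt15.Iv n (↑i+1) (↑b+1) := by
    ext x
    simp only [Finset.mem_Ioc, Stmt15.mem_Iv, Fin.le_def, Fin.lt_def]
    omega
  have e3 : Finset.Ioo i j = Stmt15.Iv n (↑i+1) ↑j := by
    ext x
    simp only [Finset.mem_Ioo, Stmt15.mem_Iv, Fin.le_def, Fin.lt_def]
    omega
  have e4 : Finset.Icc a b = Stmt15.Iv n ↑a (↑b+1) := by
    ext x
    simp only [Finset.mem_Icc, Stmt15.mem_Iv, Fin.le_def, Fin.lt_def]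
    omega
  have e5 : Finset.Ico a i = Stmt15.Iv n ↑a ↑i := by
    ext x
    simp only [Finset.mem_Ico, Stmt15.mem_Iv, Fin.le_def, Fin.lt_def]
  have e6 : Finset.Ioc j b = Stmt15.Iv n (↑j+1) (↑b+1) := by
    ext x
    simp only [Finset.mem_Ioc, Stmt15.mem_Iv, Fin.le_def, Fin.lt_def]
    omega
  rw [e1, e2, e3, e4, e5, e6]
  exact Stmt15.main ↑a ↑i ↑j ↑b (Fin.le_def.mp ha) (Fin.lt_def.mp hij)
    (Fin.le_def.mp hb) b.isLt
end

section
/- Let A be a unique factorization domain and let Q ∈ A be a prime (equivalently, irreducible) element. For nonzero polynomials P, P' ∈ A[x], we have den(P·P', x, Q) = den(P, x, Q) + den(P', x, Q). -/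
/-!
Substituting `Q x` for `x` turns the coefficient `pᵢ` into `Qⁱ pᵢ`, so `den(P, x, Q)` is the
multiplicity of the constant `Q` in `P(Q x)`. Substitution is multiplicative, and `Q` stays prime
in `A[x]` (Gauss), so this multiplicity is additive on products.
-/

/-- `v_Q(a)`: the largest `s` such that `Q ^ s` divides `a` (for `a ≠ 0` and `Q` prime in a
UFD this supremum is attained). -/
noncomputable def vQ {A : Type*} [CommRing A] (Q a : A) : ℕ :=
  sSup {s : ℕ | Q ^ s ∣ a}

/-- `den(P, x, Q) = min_{i, p_i ≠ 0} (i + v_Q(p_i))` for `P = Σ_i p_i xⁱ`. -/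
noncomputable def den {A : Type*} [CommRing A] (P : Polynomial A) (Q : A) : ℕ :=
  sInf {m : ℕ | ∃ i : ℕ, P.coeff i ≠ 0 ∧ m = i + vQ Q (P.coeff i)}

open Polynomial

theorem FiniteMultiplicity.vQ_eq {A : Type*} [CommRing A] {Q a : A}
    (h : FiniteMultiplicity Q a) : vQ Q a = multiplicity Q a := by
  have hset : {s : ℕ | Q ^ s ∣ a} = Set.Iic (multiplicity Q a) :=
    Set.ext fun _ => h.pow_dvd_iff_le_multiplicity
  rw [vQ, hset, csSup_Iic]

theorem Polynomial.comp_C_mul_X_ne_zero {A : Type*} [CommRing A] [IsDomain A] {r : A}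
    (hr : r ≠ 0) {R : A[X]} (hR : R ≠ 0) : R.comp (C r * X) ≠ 0 := by
  rwa [Ne, comp_C_mul_X_eq_zero_iff (mem_nonZeroDivisors_of_ne_zero hr)]

section

variable {A : Type*} [CommRing A] [IsDomain A] [WfDvdMonoid A] {Q : A}

theorem multiplicity_C_eq_sInf (hQ : ¬IsUnit Q) {R : A[X]} (hR : R ≠ 0) :
    multiplicity (C Q) R =
      sInf {m : ℕ | ∃ i : ℕ, R.coeff i ≠ 0 ∧ m = multiplicity Q (R.coeff i)} := by
  set S := {m : ℕ | ∃ i : ℕ, R.coeff i ≠ 0 ∧ m = multiplicity Q (R.coeff i)}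
  have hS : S.Nonempty := by
    obtain ⟨i, hi⟩ : ∃ i, R.coeff i ≠ 0 := by
      by_contra! h
      exact hR (Polynomial.ext h)
    exact ⟨_, i, hi, rfl⟩
  apply multiplicity_eq_of_dvd_of_not_dvd <;> rw [← C_pow, C_dvd_iff_dvd_coeff]
  · intro i
    by_cases hi : R.coeff i = 0
    · simp [hi]
    · exact pow_dvd_of_le_multiplicity (Nat.sInf_le ⟨i, hi, rfl⟩)
  · obtain ⟨i, hi, hmin⟩ := Nat.sInf_mem hS
    refine fun hdvd => (FiniteMultiplicity.of_not_isUnit hQ hi).not_pow_dvd_of_multiplicity_lt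
      ?_ (hdvd i)
    rw [← hmin]
    exact Nat.lt_succ_self _

theorem den_eq_multiplicity_comp (hQ : Prime Q) {P : A[X]} (hP : P ≠ 0) :
    den P Q = multiplicity (C Q) (P.comp (C Q * X)) := by
  rw [multiplicity_C_eq_sInf hQ.not_isUnit (comp_C_mul_X_ne_zero hQ.ne_zero hP), den]
  congr 1
  ext m
  refine exists_congr fun i => ?_
  simp only [comp_C_mul_X_coeff, ne_eq, mul_eq_zero, pow_eq_zero_iff', hQ.ne_zero, false_and,
    or_false]
  refine and_congr_right fun hi => ?_
  rw [multiplicity_mul hQ (FiniteMultiplicity.of_prime_left hQ (by simp [hi, hQ.ne_zero])),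
    multiplicity_pow_self_of_prime hQ, (FiniteMultiplicity.of_prime_left hQ hi).vQ_eq, add_comm]

end

/-- In a UFD `A` with a prime element `Q`, `den(·, x, Q)` is additive on products of
nonzero polynomials: `den(P·P', x, Q) = den(P, x, Q) + den(P', x, Q)`. -/
theorem stmt18 {A : Type*} [CommRing A] [IsDomain A] [UniqueFactorizationMonoid A]
    (Q : A) (hQ : Prime Q) (P P' : Polynomial A) (hP : P ≠ 0) (hP' : P' ≠ 0) :
    den (P * P') Q = den P Q + den P' Q := by
  have hQC : Prime (C Q) := prime_C_iff.mpr hQ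
  have hfin : FiniteMultiplicity (C Q) (P.comp (C Q * X) * P'.comp (C Q * X)) :=
    .of_prime_left hQC <| mul_ne_zero (comp_C_mul_X_ne_zero hQ.ne_zero hP)
      (comp_C_mul_X_ne_zero hQ.ne_zero hP')
  rw [den_eq_multiplicity_comp hQ hP, den_eq_multiplicity_comp hQ hP',
    den_eq_multiplicity_comp hQ (mul_ne_zero hP hP'), mul_comp, multiplicity_mul hQC hfin]
end
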